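/- arXiv:2308.16284 — 14 statements merged into one kernel-verified Lean document; each statement's English description precedes it below -/
import Mathlib

section
/- Let (A,*) be a commutative, possibly nonassociative and nonunital ring such that the additive subgroup generated by all products {x*y : x,y ∈ A} is all of A, and let h and f be automorphisms of (A,*). Then the following are equivalent: (1) there exists a bijective additive map g : A → A such that g(h(x*y)) = h(g(x)*g(y)) for all x,y ∈ A (i.e. g is an automorphism of the inner isotope (A,*_h)) and f(x*y) = g(h(x*y)) for all x,y ∈ A (i.e. *_f is the inner isotope of *_h by g); (2) f ∘ h = h ∘ f. -/
/-! If `g` is an automorphism of `*_h` with `f (x * y) = g (h (x * y))`, then `g` agrees with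
`f ∘ h⁻¹` on products, hence everywhere since products generate `A` additively. Substituting
this into `g (h (x * y)) = h (g x * g y)` shows that `f` and `h ∘ f ∘ h⁻¹` agree on products,
hence `f = h ∘ f ∘ h⁻¹`. Conversely, if `f` and `h` commute then `g = f ∘ h⁻¹` works. -/

section ProductsGenerate

variable {A : Type*} [NonUnitalNonAssocRing A]

theorem AddMonoidHom.eq_of_map_mul_eq
    (hA : AddSubgroup.closure {z : A | ∃ x y : A, x * y = z} = ⊤)
    {B : Type*} [AddMonoid B] {φ ψ : A →+ B} (hφψ : ∀ x y : A, φ (x * y) = ψ (x * y)) :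
    φ = ψ :=
  AddMonoidHom.eq_of_eqOn_dense hA (by rintro _ ⟨x, y, rfl⟩; exact hφψ x y)

theorem eq_comp_symm_of_map_mul_eq
    (hA : AddSubgroup.closure {z : A | ∃ x y : A, x * y = z} = ⊤)
    (h f : A ≃+* A) {g : A → A} (hg_add : ∀ x y : A, g (x + y) = g x + g y)
    (hfg : ∀ x y : A, f (x * y) = g (h (x * y))) (a : A) :
    g a = f (h.symm a) := by
  have hg := AddMonoidHom.eq_of_map_mul_eq hA
    (φ := AddMonoidHom.mk' g hg_add) (ψ := ((h.symm.trans f : A ≃+* A) : A →+ A)) fun x y => by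
      simpa using (hfg (h.symm x) (h.symm y)).symm
  exact DFunLike.congr_fun hg a

end ProductsGenerate

/-- For a commutative (possibly nonassociative, nonunital) ring `A` whose additive group is
generated by products, and automorphisms `h f` of `A`, the isotope `*_f` is an inner isotope
of `*_h` iff `f` and `h` commute. -/
theorem stmt_0 {A : Type*} [NonUnitalNonAssocCommRing A]
    (hA : AddSubgroup.closure {z : A | ∃ x y : A, x * y = z} = ⊤)
    (h f : A ≃+* A) :
    (∃ g : A → A, Function.Bijective g ∧ (∀ x y : A, g (x + y) = g x + g y) ∧
      (∀ x y : A, g (h (x * y)) = h (g x * g y)) ∧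
      (∀ x y : A, f (x * y) = g (h (x * y)))) ↔
    (∀ x : A, f (h x) = h (f x)) := by
  constructor
  · rintro ⟨g, -, hg_add, hg_mul, hfg⟩ x
    have hg := eq_comp_symm_of_map_mul_eq hA h f hg_add hfg
    have hf : (f : A →+ A) = ((h.symm.trans f).trans h : A ≃+* A) :=
      AddMonoidHom.eq_of_map_mul_eq hA fun x y => by
        show f (x * y) = h (f (h.symm (x * y)))
        rw [hfg, hg_mul, hg, hg, ← map_mul f, ← map_mul h.symm]
    simpa using DFunLike.congr_fun hf (h x)
  · intro hfh
    refine ⟨fun a => f (h.symm a), f.bijective.comp h.symm.bijective, by simp, ?_, by simp⟩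
    intro x y
    dsimp only
    rw [h.symm_apply_apply, ← map_mul f, ← map_mul h.symm, ← hfh, h.apply_symm_apply]
end

section
/- Let (A,*) be a commutative medial (possibly nonassociative and nonunital) ring, and let c be an idempotent (c*c = c) such that the left multiplication map L(c) : x ↦ c*x is bijective, with inverse map ℓ. Define a new multiplication on A by x ◇ y := ℓ(x*y). Then ◇ is commutative and associative, c is a two-sided identity for ◇ (c ◇ x = x for all x), and L(c) is an automorphism of (A,◇), i.e. c*(x ◇ y) = (c*x) ◇ (c*y) for all x,y ∈ A. -/
/-- In a commutative medial (possibly nonassociative, nonunital) ring, Kaplansky's trick: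
given an idempotent `c` with invertible left multiplication (with inverse map `ℓ`), the
multiplication `x ◇ y := ℓ (x*y)` is commutative and associative, `c` is a two-sided
identity for `◇`, and `L(c)` is an automorphism of `(A,◇)`. -/
theorem stmt_4 {A : Type*} [NonUnitalNonAssocCommRing A]
    (medial : ∀ x y z w : A, (x * y) * (z * w) = (x * z) * (y * w))
    (c : A) (hc : c * c = c)
    (ℓ : A → A) (hl1 : ∀ x : A, ℓ (c * x) = x) (hl2 : ∀ x : A, c * ℓ x = x) :
    (∀ x y : A, ℓ (x * y) = ℓ (y * x)) ∧
    (∀ x y z : A, ℓ (x * ℓ (y * z)) = ℓ (ℓ (x * y) * z)) ∧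
    (∀ x : A, ℓ (c * x) = x ∧ ℓ (x * c) = x) ∧
    (∀ x y : A, c * ℓ (x * y) = ℓ ((c * x) * (c * y))) := by
  have hinj : ∀ a b : A, c * a = c * b → a = b := fun a b h => by
    have := congrArg ℓ h; rwa [hl1, hl1] at this
  refine ⟨fun x y => by rw [mul_comm x y], ?_, fun x => ⟨hl1 x, by rw [mul_comm x c, hl1]⟩,
    fun x y => ?_⟩
  · intro x y z
    congr 1
    apply hinj
    calc c * (x * ℓ (y * z)) = (c * c) * (x * ℓ (y * z)) := by rw [hc]
      _ = (c * x) * (c * ℓ (y * z)) := medial c c x _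
      _ = (c * x) * (y * z) := by rw [hl2]
      _ = (x * c) * (y * z) := by rw [mul_comm c x]
      _ = (x * y) * (c * z) := medial x c y z
      _ = (c * ℓ (x * y)) * (c * z) := by rw [hl2]
      _ = (c * c) * (ℓ (x * y) * z) := (medial c c _ z).symm
      _ = c * (ℓ (x * y) * z) := by rw [hc]
  · have : (c * x) * (c * y) = c * (x * y) := by rw [medial c x c y, hc]
    rw [this, hl1, hl2]
end

section
/- Let (A,*) be a commutative medial (possibly nonassociative and nonunital) ring, and let c₁, c₂ be idempotents such that the left multiplication maps L(c₁) and L(c₂) are bijective. Then the composition f := L(c₁)⁻¹ ∘ L(c₂) is a bijective, additive and multiplicative map A → A (f(x*y) = f(x)*f(y) for all x,y), i.e. an automorphism of (A,*), and it satisfies f(c₁) = c₂. -/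
/-- In a commutative medial ring, if `c₁, c₂` are idempotents with bijective left
multiplications, then `f := L(c₁)⁻¹ ∘ L(c₂)` is a bijective additive multiplicative map
(an automorphism of `(A,*)`) sending `c₁` to `c₂`. -/
theorem stmt_5 {A : Type*} [NonUnitalNonAssocCommRing A]
    (medial : ∀ x y z w : A, (x * y) * (z * w) = (x * z) * (y * w))
    (c₁ c₂ : A) (h1 : c₁ * c₁ = c₁) (h2 : c₂ * c₂ = c₂)
    (hb1 : Function.Bijective fun x : A => c₁ * x)
    (hb2 : Function.Bijective fun x : A => c₂ * x)
    (ℓ₁ : A → A) (hl1 : ∀ x : A, ℓ₁ (c₁ * x) = x) (hl2 : ∀ x : A, c₁ * ℓ₁ x = x) :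
    Function.Bijective (fun x : A => ℓ₁ (c₂ * x)) ∧
    (∀ x y : A, ℓ₁ (c₂ * (x + y)) = ℓ₁ (c₂ * x) + ℓ₁ (c₂ * y)) ∧
    (∀ x y : A, ℓ₁ (c₂ * (x * y)) = ℓ₁ (c₂ * x) * ℓ₁ (c₂ * y)) ∧
    ℓ₁ (c₂ * c₁) = c₂ := by
  have hlb : Function.Bijective ℓ₁ := by
    constructor
    · intro a b hab
      have := congrArg (fun z => c₁ * z) hab
      simpa [hl2] using this
    · intro y; exact ⟨c₁ * y, hl1 y⟩
  refine ⟨hlb.comp hb2, ?_, ?_, ?_⟩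
  · intro x y
    apply hb1.injective
    show c₁ * _ = c₁ * _
    rw [hl2, mul_add, mul_add, hl2, hl2]
  · intro x y
    apply hb1.injective
    have : c₁ * (ℓ₁ (c₂ * x) * ℓ₁ (c₂ * y)) = c₂ * (x * y) := by
      calc c₁ * (ℓ₁ (c₂ * x) * ℓ₁ (c₂ * y))
          = (c₁ * c₁) * (ℓ₁ (c₂ * x) * ℓ₁ (c₂ * y)) := by rw [h1]
        _ = (c₁ * ℓ₁ (c₂ * x)) * (c₁ * ℓ₁ (c₂ * y)) := medial ..
        _ = (c₂ * x) * (c₂ * y) := by rw [hl2, hl2]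
        _ = (c₂ * c₂) * (x * y) := (medial ..).symm
        _ = c₂ * (x * y) := by rw [h2]
    show c₁ * _ = c₁ * _
    rw [hl2, this]
  · rw [mul_comm, hl1]
end

section
/- Let K be a field, L a field that is a finite-dimensional K-algebra, and σ : L → L a K-algebra automorphism. For c ∈ L, let T_c denote the K-linear endomorphism x ↦ σ(c·x) of L (left multiplication by c in the inner isotope (L,·_σ)). If c₁ and c₂ are nonzero elements satisfying σ(c₁·c₁) = c₁ and σ(c₂·c₂) = c₂ (i.e. nonzero idempotents of the isotope), then the characteristic polynomials of T_{c₁} and T_{c₂} coincide. -/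
open LinearMap in
/-- For a K-algebra automorphism `σ` of a field `L` finite dimensional over `K`, all nonzero
idempotents of the inner isotope `(L, ·_σ)` have the same characteristic polynomial of their
left multiplication operators. -/
theorem stmt_7 {K L : Type*} [Field K] [Field L] [Algebra K L] [FiniteDimensional K L]
    (σ : L ≃ₐ[K] L) (c₁ c₂ : L) (h1 : c₁ ≠ 0) (h2 : c₂ ≠ 0)
    (hc1 : σ (c₁ * c₁) = c₁) (hc2 : σ (c₂ * c₂) = c₂) :
    (σ.toLinearMap ∘ₗ LinearMap.mulLeft K c₁).charpoly =
      (σ.toLinearMap ∘ₗ LinearMap.mulLeft K c₂).charpoly := by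
  set a : L := c₁ * c₂⁻¹ with ha
  have haz : a ≠ 0 := mul_ne_zero h1 (inv_ne_zero h2)
  have d1 : σ c₁ * σ c₁ = c₁ := by rw [← map_mul]; exact hc1
  have d2 : σ c₂ * σ c₂ = c₂ := by rw [← map_mul]; exact hc2
  have hσ1 : σ c₁ ≠ 0 := fun h => h1 (by rw [← d1, h, mul_zero])
  have hσ2 : σ c₂ ≠ 0 := fun h => h2 (by rw [← d2, h, mul_zero])
  -- linear equivalence: multiplication by a
  let e : L ≃ₗ[K] L := LinearEquiv.ofLinear (LinearMap.mulLeft K a)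
    (LinearMap.mulLeft K a⁻¹)
    (by ext x; simp [LinearMap.mulLeft_apply, ← mul_assoc, mul_inv_cancel₀ haz])
    (by ext x; simp [LinearMap.mulLeft_apply, ← mul_assoc, inv_mul_cancel₀ haz])
  have key2 : a⁻¹ * (σ c₁ * σ a) = σ c₂ := by
    rw [ha, map_mul, map_inv₀, mul_inv, inv_inv]
    calc c₁⁻¹ * c₂ * (σ c₁ * (σ c₁ * (σ c₂)⁻¹))
        = (σ c₁ * σ c₁) * c₁⁻¹ * (c₂ * (σ c₂)⁻¹) := by ring
      _ = c₁ * c₁⁻¹ * (c₂ * (σ c₂)⁻¹) := by rw [d1]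
      _ = c₂ * (σ c₂)⁻¹ := by rw [mul_inv_cancel₀ h1, one_mul]
      _ = (σ c₂ * σ c₂) * (σ c₂)⁻¹ := by rw [d2]
      _ = σ c₂ := by field_simp
  have key : e.symm.conj (σ.toLinearMap ∘ₗ LinearMap.mulLeft K c₁)
      = σ.toLinearMap ∘ₗ LinearMap.mulLeft K c₂ := by
    ext x
    simp only [LinearEquiv.conj_apply, LinearMap.coe_comp, Function.comp_apply,
      LinearEquiv.symm_symm, LinearEquiv.coe_coe, LinearMap.mulLeft_apply, e,
      LinearEquiv.ofLinear_apply, LinearEquiv.ofLinear_symm_apply, AlgEquiv.toLinearMap_apply]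
    calc a⁻¹ * σ (c₁ * (a * x)) = (a⁻¹ * (σ c₁ * σ a)) * σ x := by
          rw [map_mul, map_mul]; ring
      _ = σ c₂ * σ x := by rw [key2]
      _ = σ (c₂ * x) := (map_mul σ c₂ x).symm
  rw [← key, LinearEquiv.charpoly_conj]
end

section
/- Let L be a field, σ a ring automorphism of L with σ^d = id for some positive integer d, and c ∈ L a nonzero element satisfying σ(c·c) = c (a nonzero idempotent of the inner isotope (L,·_σ)). Then c^(2^d − 1) = 1. -/
/-- If `σ` is a ring automorphism of a field `L` with `σ^d = id`, `d ≥ 1`, and `c ≠ 0`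
satisfies `σ (c·c) = c` (a nonzero idempotent of the inner isotope), then `c^(2^d - 1) = 1`. -/
theorem stmt_8 {L : Type*} [Field L] (σ : RingAut L) (d : ℕ) (hd : 0 < d)
    (hσ : σ ^ d = 1) (c : L) (hc0 : c ≠ 0) (hc : σ (c * c) = c) :
    c ^ (2 ^ d - 1) = 1 := by
  have hinv : σ⁻¹ c = c ^ 2 := by
    show σ.symm c = c ^ 2
    exact σ.symm_apply_eq.mpr (by rw [sq]; exact hc.symm)
  have key : ∀ k : ℕ, (σ⁻¹ ^ k) c = c ^ (2 ^ k) := by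
    intro k
    induction k with
    | zero =>
      simp only [pow_zero, pow_one]
      rfl
    | succ k ih =>
      have : (σ⁻¹ ^ (k+1)) c = σ⁻¹ ((σ⁻¹ ^ k) c) := by
        rw [pow_succ']
        rfl
      rw [this, ih, map_pow, hinv, ← pow_mul, pow_succ, mul_comm]
  have hcd : c ^ (2 ^ d) = c := by
    have := key d
    rw [inv_pow, hσ, inv_one] at this
    simpa using this.symm
  have h1 : (1 : ℕ) ≤ 2 ^ d := Nat.one_le_two_pow
  have : c ^ (2 ^ d - 1) * c = c := by
    rw [← pow_succ, Nat.sub_add_cancel h1, hcd]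
  exact mul_right_cancel₀ hc0 (by rw [this, one_mul])
end

section
/- Let K be a field, n a natural number, and σ, π permutations of Fin n. On Fin n → K define the inner isotope multiplications (x •_σ y)(i) = x(σ(i))·y(σ(i)) and (x •_π y)(i) = x(π(i))·y(π(i)). Then there exists a K-linear bijection f of Fin n → K with f(x •_σ y) = f(x) •_π f(y) for all x, y if and only if σ and π are conjugate in the symmetric group of Fin n. -/
/-!
Let `f` be an isomorphism from `•_σ` to `•_π` and let `S i` be the support of the image of the
`i`-th basis vector `e i`. Since `e i •_σ e j = 0` for `i ≠ j` and `e (σ i) •_σ e (σ i) = e i`,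
and since the support of `x •_π y` is `π⁻¹ (supp x ∩ supp y)`, the `S i` are `n` nonempty
pairwise disjoint subsets of `Fin n`, hence singletons `{a i}` for a permutation `a`, and
`S i = π⁻¹ (S (σ i))` reads `π ∘ a = a ∘ σ`. Conversely, if `π = c σ c⁻¹` then `x ↦ x ∘ c⁻¹`
is an isomorphism.
-/

open Function Equiv

theorem exists_perm_forall_eq_singleton_of_pairwise_disjoint {ι : Type*} [Finite ι]
    {s : ι → Set ι} (hne : ∀ i, (s i).Nonempty) (hdisj : Pairwise (Disjoint on s)) :
    ∃ a : Perm ι, ∀ i, s i = {a i} := by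
  choose a ha using hne
  have eq_of_mem : ∀ i j, a j ∈ s i → i = j := fun i j h ↦
    hdisj.eq (Set.not_disjoint_iff.2 ⟨a j, h, ha j⟩)
  have hbij : Bijective a :=
    Finite.injective_iff_bijective.1 fun i j hij ↦ eq_of_mem i j (hij ▸ ha i)
  refine ⟨Equiv.ofBijective a hbij, fun i ↦ Set.eq_singleton_iff_unique_mem.2 ⟨ha i, ?_⟩⟩
  intro m hm
  obtain ⟨j, rfl⟩ := hbij.2 m
  rw [eq_of_mem i j hm]
  rfl

section

variable {ι R : Type*}

/-- The inner isotope product `x •_σ y`. -/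
def isotopeMul [Mul R] (σ : Perm ι) (x y : ι → R) : ι → R :=
  fun i ↦ x (σ i) * y (σ i)

theorem isotopeMul_eq_comp [Mul R] (σ : Perm ι) (x y : ι → R) :
    isotopeMul σ x y = (x * y) ∘ σ :=
  rfl

theorem support_isotopeMul [MulZeroClass R] [NoZeroDivisors R] (σ : Perm ι) (x y : ι → R) :
    support (isotopeMul σ x y) = σ ⁻¹' (support x ∩ support y) := by
  rw [isotopeMul_eq_comp, support_comp_eq_preimage, Pi.mul_def, support_mul]

variable [DecidableEq ι] [MulZeroOneClass R]

theorem isotopeMul_single_single_of_ne (σ : Perm ι) {i j : ι} (hij : i ≠ j) :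
    isotopeMul σ (Pi.single i (1 : R)) (Pi.single j 1) = 0 := by
  ext k
  by_cases hk : σ k = i
  · simp [isotopeMul, hk, hij]
  · simp [isotopeMul, hk]

theorem isotopeMul_single_apply_self (σ : Perm ι) (i : ι) :
    isotopeMul σ (Pi.single (σ i) (1 : R)) (Pi.single (σ i) 1) = Pi.single i 1 := by
  ext k
  by_cases hk : k = i
  · simp [isotopeMul, hk]
  · simp [isotopeMul, hk, σ.injective.eq_iff]

end

section

variable {ι R : Type*} [Semiring R]

theorem isConj_of_linearEquiv_isotopeMul [Finite ι] [NoZeroDivisors R] [Nontrivial R]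
    {σ π : Perm ι} (f : (ι → R) ≃ₗ[R] (ι → R))
    (hf : ∀ x y, f (isotopeMul σ x y) = isotopeMul π (f x) (f y)) : IsConj σ π := by
  classical
  let S : ι → Set ι := fun i ↦ support (f (Pi.single i 1))
  have hne : ∀ i, (S i).Nonempty := fun i ↦
    support_nonempty_iff.2 (f.map_ne_zero_iff.2 (Pi.single_ne_zero_iff.2 one_ne_zero))
  have hdisj : Pairwise (Disjoint on S) := by
    intro i j hij
    have h := congrArg support (hf (Pi.single i 1) (Pi.single j 1))
    rw [isotopeMul_single_single_of_ne σ hij, map_zero, support_zero, support_isotopeMul,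
      ← Set.preimage_empty] at h
    exact Set.disjoint_iff_inter_eq_empty.2 (Set.preimage_injective.2 π.surjective h).symm
  have hpre : ∀ i, S i = π ⁻¹' S (σ i) := fun i ↦
    calc S i = support (f (isotopeMul σ (Pi.single (σ i) 1) (Pi.single (σ i) 1))) := by
          rw [isotopeMul_single_apply_self]
      _ = π ⁻¹' S (σ i) := by rw [hf, support_isotopeMul, Set.inter_self]
  obtain ⟨a, ha⟩ := exists_perm_forall_eq_singleton_of_pairwise_disjoint hne hdisj
  refine isConj_iff.2 ⟨a, mul_inv_eq_iff_eq_mul.2 (Equiv.ext fun i ↦ ?_)⟩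
  have h : a i ∈ π ⁻¹' {a (σ i)} := by rw [← ha, ← hpre, ha]; exact Set.mem_singleton _
  exact h.symm

theorem exists_linearEquiv_isotopeMul_of_isConj {σ π : Perm ι} (h : IsConj σ π) :
    ∃ f : (ι → R) ≃ₗ[R] (ι → R), ∀ x y, f (isotopeMul σ x y) = isotopeMul π (f x) (f y) := by
  obtain ⟨c, rfl⟩ := isConj_iff.1 h
  refine ⟨LinearEquiv.funCongrLeft R R c⁻¹, fun x y ↦ ?_⟩
  ext i
  simp [isotopeMul, LinearEquiv.funCongrLeft_apply]

end

/-- Two inner isotopes `(Fin n → K, •_σ)` and `(Fin n → K, •_π)` of the coordinatewise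
product algebra are isomorphic (via a K-linear multiplicative bijection) iff `σ` and `π`
are conjugate in the symmetric group. -/
theorem stmt_10 {K : Type*} [Field K] (n : ℕ) (σ π : Equiv.Perm (Fin n)) :
    (∃ f : (Fin n → K) ≃ₗ[K] (Fin n → K),
      ∀ x y : Fin n → K,
        f (fun i => x (σ i) * y (σ i)) = fun i => f x (π i) * f y (π i)) ↔
    IsConj σ π :=
  ⟨fun ⟨f, hf⟩ ↦ isConj_of_linearEquiv_isotopeMul f hf, exists_linearEquiv_isotopeMul_of_isConj⟩
end

section
/- A nonzero element c ∈ Fin n → K is an idempotent of •_τ (equivalently, c(i+1)² = c(i) for all i ∈ Fin n, cyclically) if and only if c = c_k for some k ∈ ℤ/(2^n − 1)ℤ. Moreover the elements c_k, k ∈ ℤ/(2^n − 1)ℤ, are pairwise distinct, and they satisfy the multiplication rule c_i •_τ c_j = c_{2^(n−1)·(i+j)} for all i, j ∈ ℤ/(2^n − 1)ℤ. -/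
/-!
Write `N = 2 ^ n - 1`. Since `2 ^ n = 1` in `ZMod N`, the exponents `e i = 2 ^ (n - 1 - i)` satisfy
`e i = 2 * e (i + 1)` and `e (i + 1) = 2 ^ (n - 1) * e i` cyclically; as `a ↦ ζ ^ a.val` turns sums in
`ZMod N` into products, the first relation makes every `c_k` an idempotent and the second one gives the
multiplication rule. Conversely, for an idempotent `x` the relations `x (i + 1) ^ 2 = x i` with
`i < n - 1` force `x i = a ^ 2 ^ (n - 1 - i)` for `a = x (n - 1)`, and the relation closing the cycle
gives `a ^ 2 ^ n = a`. So either `x = 0` or `a` is an `N`-th root of unity, hence `a = ζ ^ k` and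
`x = c_k`. Distinctness follows from `c_k (n - 1) = ζ ^ k.val`.
-/

section ZModPow

variable {M : Type*} [Monoid M] {N : ℕ} {ζ : M}

lemma pow_val_natCast_of_pow_eq_one (hζ : ζ ^ N = 1) (a : ℕ) :
    ζ ^ (a : ZMod N).val = ζ ^ a := by
  rw [ZMod.val_natCast, ← pow_eq_pow_mod a hζ]

lemma pow_val_add_of_pow_eq_one [NeZero N] (hζ : ζ ^ N = 1) (a b : ZMod N) :
    ζ ^ (a + b).val = ζ ^ a.val * ζ ^ b.val := by
  rw [ZMod.val_add, ← pow_eq_pow_mod _ hζ, pow_add]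

end ZModPow

instance NeZero.two_pow_succ_sub_one (m : ℕ) : NeZero (2 ^ (m + 1) - 1) :=
  ⟨by have := Nat.one_lt_two_pow m.succ_ne_zero; omega⟩

lemma ZMod.two_pow_eq_one (n : ℕ) : (2 : ZMod (2 ^ n - 1)) ^ n = 1 := by
  have h := ZMod.natCast_self (2 ^ n - 1)
  rw [Nat.cast_sub Nat.one_le_two_pow, sub_eq_zero] at h
  exact_mod_cast h

lemma eq_zero_or_pow_eq_one_of_pow_succ_eq_self {M₀ : Type*} [MonoidWithZero M₀]
    [IsLeftCancelMulZero M₀] {a : M₀} {k : ℕ} (h : a ^ (k + 1) = a) : a = 0 ∨ a ^ k = 1 := by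
  refine or_iff_not_imp_left.2 fun ha => mul_left_cancel₀ ha ?_
  rw [mul_one, ← pow_succ', h]

section FinCyclic

variable {M : Type*} [Monoid M] {m : ℕ} {g : M}

lemma pow_sub_val_eq_mul_pow_sub_val_add_one (hg : g ^ (m + 1) = 1) (i : Fin (m + 1)) :
    g ^ (m - i) = g * g ^ (m - ↑(i + 1)) := by
  rw [← pow_succ', Fin.val_add_one]
  split_ifs with hi
  · rw [hi, Fin.val_last, Nat.sub_self, Nat.sub_zero, pow_zero, hg]
  · have : (i : ℕ) < m := Fin.val_lt_last hi
    congr 1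
    omega

lemma pow_sub_val_add_one (hg : g ^ (m + 1) = 1) (i : Fin (m + 1)) :
    g ^ (m - ↑(i + 1)) = g ^ (m - i) * g ^ m := by
  rw [pow_sub_val_eq_mul_pow_sub_val_add_one hg i, (Commute.self_pow g _).eq, mul_assoc,
    ← pow_succ', hg, mul_one]

lemma eq_pow_two_pow_of_mul_self_succ {x : Fin (m + 1) → M}
    (hx : ∀ i : Fin m, x i.succ * x i.succ = x i.castSucc) (i : Fin (m + 1)) :
    x i = x (Fin.last m) ^ 2 ^ (m - i) := by
  induction i using Fin.reverseInduction with
  | last => simp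
  | cast i ih =>
    rw [← hx, ih, ← pow_add, ← two_mul, ← pow_succ']
    congr 2
    simp only [Fin.val_succ, Fin.val_castSucc]
    omega

end FinCyclic

section CyclicIdempotent

variable {M : Type*} [Monoid M] {m : ℕ} {ζ : M}

/-- The element `c_k`, for `n = m + 1`. -/
def cyclicIdempotent (ζ : M) (m : ℕ) (k : ZMod (2 ^ (m + 1) - 1)) (i : Fin (m + 1)) : M :=
  ζ ^ ((2 ^ (m - i) * k : ZMod (2 ^ (m + 1) - 1)).val)

lemma cyclicIdempotent_last (k : ZMod (2 ^ (m + 1) - 1)) :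
    cyclicIdempotent ζ m k (Fin.last m) = ζ ^ k.val := by
  simp [cyclicIdempotent]

lemma cyclicIdempotent_mul_self_add_one (hζ : ζ ^ (2 ^ (m + 1) - 1) = 1)
    (k : ZMod (2 ^ (m + 1) - 1)) (i : Fin (m + 1)) :
    cyclicIdempotent ζ m k (i + 1) * cyclicIdempotent ζ m k (i + 1) = cyclicIdempotent ζ m k i := by
  rw [cyclicIdempotent, cyclicIdempotent, ← pow_val_add_of_pow_eq_one hζ, ← two_mul, ← mul_assoc,
    ← pow_sub_val_eq_mul_pow_sub_val_add_one (ZMod.two_pow_eq_one _) i]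

lemma cyclicIdempotent_add_one_mul (hζ : ζ ^ (2 ^ (m + 1) - 1) = 1)
    (j k : ZMod (2 ^ (m + 1) - 1)) (i : Fin (m + 1)) :
    cyclicIdempotent ζ m j (i + 1) * cyclicIdempotent ζ m k (i + 1) =
      cyclicIdempotent ζ m (2 ^ m * (j + k)) i := by
  rw [cyclicIdempotent, cyclicIdempotent, cyclicIdempotent, ← pow_val_add_of_pow_eq_one hζ,
    ← mul_add, pow_sub_val_add_one (ZMod.two_pow_eq_one _) i, mul_assoc]

end CyclicIdempotent

lemma cyclicIdempotent_injective {M : Type*} [CommMonoid M] {m : ℕ} {ζ : M}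
    (hζ : IsPrimitiveRoot ζ (2 ^ (m + 1) - 1)) : Function.Injective (cyclicIdempotent ζ m) := by
  intro k l hkl
  have h := congrFun hkl (Fin.last m)
  rw [cyclicIdempotent_last, cyclicIdempotent_last] at h
  exact ZMod.val_injective _ (hζ.pow_inj (ZMod.val_lt k) (ZMod.val_lt l) h)

lemma exists_eq_cyclicIdempotent {R : Type*} [CommRing R] [IsDomain R] {m : ℕ} {ζ : R}
    (hζ : IsPrimitiveRoot ζ (2 ^ (m + 1) - 1)) {x : Fin (m + 1) → R} (hx0 : x ≠ 0)
    (hx : ∀ i, x (i + 1) * x (i + 1) = x i) : ∃ k, x = cyclicIdempotent ζ m k := by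
  have hpow := eq_pow_two_pow_of_mul_self_succ (x := x) fun i => by
    rw [← Fin.coeSucc_eq_succ, hx]
  set a := x (Fin.last m)
  have ha : a ^ (2 ^ (m + 1) - 1 + 1) = a := by
    have h := hx (Fin.last m)
    rw [Fin.last_add_one, hpow 0, Fin.val_zero, Nat.sub_zero, ← pow_add, ← two_mul,
      ← pow_succ'] at h
    rwa [Nat.sub_add_cancel Nat.one_le_two_pow]
  obtain ha0 | haN := eq_zero_or_pow_eq_one_of_pow_succ_eq_self ha
  · refine absurd (funext fun i => ?_) hx0
    rw [hpow i, ha0, zero_pow (pow_ne_zero _ two_ne_zero), Pi.zero_apply]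
  obtain ⟨k, -, hk⟩ := hζ.eq_pow_of_pow_eq_one haN
  refine ⟨k, funext fun i => ?_⟩
  have hexp : (2 ^ (m - i) * k : ZMod (2 ^ (m + 1) - 1)) = ((k * 2 ^ (m - i) : ℕ) : ZMod _) := by
    push_cast
    ring
  rw [hpow i, ← hk, ← pow_mul, cyclicIdempotent, hexp,
    pow_val_natCast_of_pow_eq_one hζ.pow_eq_one]

theorem stmt_11_general {K : Type*} [Field K] (n : ℕ) [NeZero n]
    (ζ : K) (hζ : IsPrimitiveRoot ζ (2 ^ n - 1))
    (c : ZMod (2 ^ n - 1) → Fin n → K)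
    (hc : ∀ k (i : Fin n), c k i = ζ ^ ((2 ^ (n - 1 - (i : ℕ)) * k : ZMod (2 ^ n - 1)).val)) :
    (∀ x : Fin n → K, x ≠ 0 →
      ((∀ i : Fin n, x (i + 1) * x (i + 1) = x i) ↔ ∃ k, x = c k)) ∧
    Function.Injective c ∧
    (∀ i j : ZMod (2 ^ n - 1),
      (fun t : Fin n => c i (t + 1) * c j (t + 1)) = c (2 ^ (n - 1) * (i + j))) := by
  obtain ⟨m, rfl⟩ := Nat.exists_eq_add_one_of_ne_zero (NeZero.ne n)
  obtain rfl : c = cyclicIdempotent ζ m := funext₂ fun k i => by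
    rw [hc, cyclicIdempotent, Nat.add_sub_cancel]
  rw [Nat.add_sub_cancel]
  refine ⟨fun x hx0 => ⟨exists_eq_cyclicIdempotent hζ hx0, ?_⟩, cyclicIdempotent_injective hζ,
    fun j k => funext (cyclicIdempotent_add_one_mul hζ.pow_eq_one j k)⟩
  rintro ⟨k, rfl⟩
  exact cyclicIdempotent_mul_self_add_one hζ.pow_eq_one k

/-- The nonzero idempotents of the cyclic-shift inner isotope `(Fin n → K, •_τ)` are exactly
the elements `c_k`, `k ∈ ℤ/(2^n − 1)ℤ`; these are pairwise distinct, and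
`c_i •_τ c_j = c_{2^(n−1)(i+j)}`. -/
theorem stmt_11 {K : Type*} [Field K] (n : ℕ) [NeZero n] (hn : 2 ≤ n)
    (ζ : K) (hζ : IsPrimitiveRoot ζ (2 ^ n - 1))
    (c : ZMod (2 ^ n - 1) → Fin n → K)
    (hc : ∀ k (i : Fin n), c k i = ζ ^ ((2 ^ (n - 1 - (i : ℕ)) * k : ZMod (2 ^ n - 1)).val)) :
    (∀ x : Fin n → K, x ≠ 0 →
      ((∀ i : Fin n, x (i + 1) * x (i + 1) = x i) ↔ ∃ k, x = c k)) ∧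
    Function.Injective c ∧
    (∀ i j : ZMod (2 ^ n - 1),
      (fun t : Fin n => c i (t + 1) * c j (t + 1)) = c (2 ^ (n - 1) * (i + j))) :=
  stmt_11_general n ζ hζ c hc
end

section
/- Assume in addition that K contains a primitive n-th root of unity ε. Then for every nonzero idempotent c of •_τ, the characteristic polynomial of the K-linear endomorphism L_τ(c) : x ↦ c •_τ x equals X^n − 1; in particular ε, ε², …, ε^n are exactly the eigenvalues of L_τ(c), each eigenvalue is simple (each eigenspace is one-dimensional), and L_τ(c)^n is the identity map of Fin n → K. -/
/-!
With `w i = c (i + 1)`, `L` is the weighted cyclic shift `(L x) i = w i * x (i + 1)`, so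
`Lⁿ = (∏ w) • 1`. From `c (i + 1) ^ 2 = c i` and `c ≠ 0`, a zero coordinate would spread around
the cycle, so all `c i ≠ 0`, and `∏ c = (∏ c) ^ 2` forces `∏ c = 1`; hence `Lⁿ = 1` and every
eigenvalue is an `n`-th root of unity. Conversely, for `μⁿ = 1` the vector
`∑ₖ Lᵏ μⁿ⁻¹⁻ᵏ e₀` is killed by `L - μ` (as `(L - μ) ∑ₖ Lᵏ μⁿ⁻¹⁻ᵏ = Lⁿ - μⁿ`) and has
`0`-th coordinate `μⁿ⁻¹ ≠ 0`. The eigenvalue equation `w i * x (i + 1) = μ * x i` determines an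
eigenvector from its `0`-th coordinate, so eigenspaces are lines. Finally the characteristic
polynomial is monic of degree `n` and vanishes at the `n` distinct `n`-th roots of unity, so it
is `Xⁿ - 1`.
-/

open Polynomial Module Module.End Finset

theorem IsPrimitiveRoot.pow_eq_one_iff_exists_pow {K : Type*} [CommRing K] [IsDomain K]
    {n : ℕ} [NeZero n] {ε : K} (hε : IsPrimitiveRoot ε n) (μ : K) :
    μ ^ n = 1 ↔ ∃ p : ℕ, 1 ≤ p ∧ p ≤ n ∧ μ = ε ^ p := by
  constructor
  · intro hμ
    obtain ⟨p, hp, rfl⟩ := hε.eq_pow_of_pow_eq_one hμ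
    rcases Nat.eq_zero_or_pos p with rfl | hpos
    · exact ⟨n, NeZero.one_le, le_rfl, by rw [pow_zero, hε.pow_eq_one]⟩
    · exact ⟨p, hpos, hp.le, rfl⟩
  · rintro ⟨p, -, -, rfl⟩
    rw [← pow_mul, mul_comm, pow_mul, hε.pow_eq_one, one_pow]

theorem Polynomial.eq_X_pow_sub_one_of_monic_of_isRoot {K : Type*} [Field K] {n : ℕ}
    [NeZero n] {ε : K} (hε : IsPrimitiveRoot ε n) {q : K[X]} (hq : q.Monic)
    (hdeg : q.natDegree = n) (hroot : ∀ μ : K, μ ^ n = 1 → q.IsRoot μ) :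
    q = X ^ n - 1 := by
  have hmonic : (X ^ n - 1 : K[X]).Monic := by
    simpa using monic_X_pow_sub_C (1 : K) (NeZero.ne n)
  have hdeg' : (X ^ n - 1 : K[X]).natDegree = n := by
    simpa using natDegree_X_pow_sub_C (n := n) (r := (1 : K))
  refine eq_of_degree_sub_lt_of_eval_finset_eq (s := nthRootsFinset n (1 : K)) ?_ ?_
  · have hlt := degree_sub_lt_left (p := q) (q := X ^ n - 1)
      (by rw [degree_eq_natDegree hq.ne_zero, degree_eq_natDegree hmonic.ne_zero, hdeg, hdeg'])
      hq.ne_zero (by rw [hq.leadingCoeff, hmonic.leadingCoeff])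
    rw [hε.card_nthRootsFinset]
    rwa [degree_eq_natDegree hq.ne_zero, hdeg] at hlt
  · intro μ hμ
    have hμ : μ ^ n = 1 := (mem_nthRootsFinset (NeZero.pos n) 1).1 hμ
    simp [(hroot μ hμ).eq_zero, hμ]

namespace Module.End

variable {R M : Type*} [CommRing R] [AddCommGroup M] [Module R M] {f : End R M} {μ : R} {n : ℕ}

theorem HasEigenvalue.pow_eq_one [IsDomain R] [IsTorsionFree R M] (hμ : f.HasEigenvalue μ)
    (hf : f ^ n = 1) : μ ^ n = 1 := by
  obtain ⟨v, hv⟩ := hμ.exists_hasEigenvector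
  have h := hv.pow_apply n
  rw [hf, one_apply] at h
  exact (smul_left_injective R hv.2).eq_iff.1 (by rw [← h, one_smul])

theorem geom_sum₂_apply_mem_eigenspace (hf : f ^ n = 1) (hμ : μ ^ n = 1) (x : M) :
    (∑ i ∈ range n, f ^ i * algebraMap R (End R M) μ ^ (n - 1 - i)) x ∈ f.eigenspace μ := by
  have h := (Algebra.commute_algebraMap_right μ f).mul_geom_sum₂ n
  rw [hf, ← map_pow, hμ, map_one, sub_self] at h
  rw [mem_eigenspace_iff, ← sub_eq_zero, ← algebraMap_end_apply (S := R), ← LinearMap.sub_apply,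
    ← mul_apply, h, LinearMap.zero_apply]

end Module.End

open Fin.NatCast in
theorem Fin.prod_range_add_natCast {M : Type*} [CommMonoid M] {n : ℕ} [NeZero n] (f : Fin n → M)
    (i : Fin n) : ∏ j ∈ range n, f (i + j) = ∏ j, f j := by
  rw [← Fin.prod_univ_eq_prod_range (fun j : ℕ => f (i + j))]
  simp only [Fin.cast_val_eq_self]
  exact Equiv.prod_comp (Equiv.addLeft i) f

section WeightedShift

open Fin.NatCast

variable {K : Type*} [Field K] {n : ℕ} [NeZero n] {w : Fin n → K} {L : End K (Fin n → K)}

theorem weightedShift_pow_apply (hL : ∀ x i, L x i = w i * x (i + 1)) (k : ℕ)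
    (x : Fin n → K) (i : Fin n) : (L ^ k) x i = (∏ j ∈ range k, w (i + j)) * x (i + k) := by
  induction k generalizing x with
  | zero => simp
  | succ k ih =>
    rw [pow_succ, mul_apply, ih, hL, prod_range_succ, Nat.cast_succ, add_assoc, mul_assoc]

theorem weightedShift_pow_self (hL : ∀ x i, L x i = w i * x (i + 1)) :
    L ^ n = (∏ i, w i) • 1 := by
  refine LinearMap.ext fun x => funext fun i => ?_
  rw [weightedShift_pow_apply hL, Fin.prod_range_add_natCast, Fin.natCast_self, add_zero]
  rfl

theorem weightedShift_eq_zero_of_mem_eigenspace (hL : ∀ x i, L x i = w i * x (i + 1))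
    (hw : ∀ i, w i ≠ 0) {μ : K} {x : Fin n → K} (hx : x ∈ L.eigenspace μ) (h0 : x 0 = 0) :
    x = 0 := by
  rw [mem_eigenspace_iff] at hx
  have hsucc : ∀ i, x i = 0 → x (i + 1) = 0 := fun i hi => by
    have h := congrFun hx i
    rw [hL, Pi.smul_apply, hi, smul_zero] at h
    exact (mul_eq_zero.1 h).resolve_left (hw i)
  have hcast : ∀ k : ℕ, x k = 0 := fun k => by
    induction k with
    | zero => simpa using h0
    | succ k ih => rw [Nat.cast_succ]; exact hsucc _ ih
  funext i
  simpa using hcast i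

theorem weightedShift_finrank_eigenspace_le_one (hL : ∀ x i, L x i = w i * x (i + 1))
    (hw : ∀ i, w i ≠ 0) (μ : K) : finrank K (L.eigenspace μ) ≤ 1 := by
  let eval₀ : L.eigenspace μ →ₗ[K] K := (LinearMap.proj 0).comp (L.eigenspace μ).subtype
  have h : Function.Injective eval₀ := by
    rw [← LinearMap.ker_eq_bot, LinearMap.ker_eq_bot']
    exact fun x hx => Subtype.ext (weightedShift_eq_zero_of_mem_eigenspace hL hw x.2 hx)
  simpa using LinearMap.finrank_le_finrank_of_injective h

theorem weightedShift_hasEigenvalue (hL : ∀ x i, L x i = w i * x (i + 1))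
    (hprod : ∏ i, w i = 1) {μ : K} (hμ : μ ^ n = 1) : HasEigenvalue L μ := by
  have hLn : L ^ n = 1 := by rw [weightedShift_pow_self hL, hprod, one_smul]
  set v : Fin n → K :=
    (∑ k ∈ range n, L ^ k * algebraMap K (End K (Fin n → K)) μ ^ (n - 1 - k)) (Pi.single 0 1)
  have hv0 : v 0 = μ ^ (n - 1) := by
    simp only [v, LinearMap.sum_apply, Finset.sum_apply, ← map_pow, mul_apply,
      algebraMap_end_apply, weightedShift_pow_apply hL, zero_add, Pi.smul_apply, Pi.single_apply,
      smul_eq_mul, Fin.natCast_eq_zero]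
    rw [sum_eq_single 0]
    · simp
    · intro k hk hk0
      have hndvd : ¬n ∣ k := fun h => hk0 (Nat.eq_zero_of_dvd_of_lt h (mem_range.1 hk))
      simp [hndvd]
    · simp [NeZero.ne n]
  refine hasEigenvalue_of_hasEigenvector (x := v)
    ⟨geom_sum₂_apply_mem_eigenspace hLn hμ _, fun hv => ?_⟩
  have h := congrFun hv 0
  rw [hv0] at h
  exact ((IsUnit.of_pow_eq_one hμ (NeZero.ne n)).pow _).ne_zero h

end WeightedShift

section CyclicSquares

open Fin.NatCast

variable {K : Type*} [Field K] {n : ℕ} [NeZero n] {c : Fin n → K}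

theorem ne_zero_of_mul_self_succ (hc : ∀ i, c (i + 1) * c (i + 1) = c i) (hc0 : c ≠ 0)
    (i : Fin n) : c i ≠ 0 := by
  intro hi
  have hk : ∀ k : ℕ, c (i + k) = 0 := fun k => by
    induction k with
    | zero => simpa using hi
    | succ k ih => rw [Nat.cast_succ, ← add_assoc]; exact mul_self_eq_zero.1 ((hc _).trans ih)
  exact hc0 (funext fun j => by simpa using hk (j - i).val)

theorem prod_eq_one_of_mul_self_succ (hc : ∀ i, c (i + 1) * c (i + 1) = c i) (hc0 : c ≠ 0) :
    ∏ i, c i = 1 := by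
  have hshift : ∏ i, c (i + 1) = ∏ i, c i := Equiv.prod_comp (Equiv.addRight 1) c
  have hsq : (∏ i, c i) * ∏ i, c i = ∏ i, c i :=
    calc (∏ i, c i) * ∏ i, c i = ∏ i, c (i + 1) * c (i + 1) := by
          rw [prod_mul_distrib, hshift]
      _ = ∏ i, c i := prod_congr rfl fun i _ => hc i
  exact (mul_eq_left₀ (prod_ne_zero_iff.2 fun i _ => ne_zero_of_mul_self_succ hc hc0 i)).1 hsq

end CyclicSquares

theorem stmt_13_general {K : Type*} [Field K] (n : ℕ) [NeZero n]
    (ε : K) (hε : IsPrimitiveRoot ε n)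
    (c : Fin n → K) (hc0 : c ≠ 0) (hc : ∀ i : Fin n, c (i + 1) * c (i + 1) = c i)
    (L : (Fin n → K) →ₗ[K] (Fin n → K))
    (hL : ∀ (x : Fin n → K) (i : Fin n), L x i = c (i + 1) * x (i + 1)) :
    L.charpoly = Polynomial.X ^ n - 1 ∧
    (∀ μ : K, Module.End.HasEigenvalue L μ ↔ ∃ p : ℕ, 1 ≤ p ∧ p ≤ n ∧ μ = ε ^ p) ∧
    (∀ p : ℕ, 1 ≤ p → p ≤ n →
      Module.finrank K (Module.End.eigenspace L (ε ^ p)) = 1) ∧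
    (∀ x : Fin n → K, (L ^ n) x = x) := by
  have hw : ∀ i, c (i + 1) ≠ 0 := fun i => ne_zero_of_mul_self_succ hc hc0 _
  have hprod : ∏ i, c (i + 1) = 1 :=
    (Equiv.prod_comp (Equiv.addRight 1) c).trans (prod_eq_one_of_mul_self_succ hc hc0)
  have hLn : L ^ n = 1 := by rw [weightedShift_pow_self hL, hprod, one_smul]
  have hEig (μ : K) : HasEigenvalue L μ ↔ μ ^ n = 1 :=
    ⟨fun h => h.pow_eq_one hLn, weightedShift_hasEigenvalue hL hprod⟩
  refine ⟨?_, fun μ => (hEig μ).trans (hε.pow_eq_one_iff_exists_pow μ), fun p hp1 hpn => ?_,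
    fun x => by rw [hLn, one_apply]⟩
  · refine eq_X_pow_sub_one_of_monic_of_isRoot hε (LinearMap.charpoly_monic L)
      (by rw [LinearMap.charpoly_natDegree, finrank_fin_fun]) fun μ hμ => ?_
    exact (hasEigenvalue_iff_isRoot_charpoly L μ).1 ((hEig μ).2 hμ)
  · have hp : HasEigenvalue L (ε ^ p) :=
      (hEig _).2 ((hε.pow_eq_one_iff_exists_pow _).2 ⟨p, hp1, hpn, rfl⟩)
    exact le_antisymm (weightedShift_finrank_eigenspace_le_one hL hw _)
      (Submodule.one_le_finrank_iff.2 hp)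

/-- Every nonzero idempotent `c` of the cyclic-shift isotope `(Fin n → K, •_τ)` has left
multiplication operator with characteristic polynomial `X^n − 1`; its eigenvalues are
exactly `ε, ε², …, ε^n`, each eigenspace is one-dimensional, and `L_τ(c)^n = id`. -/
theorem stmt_13 {K : Type*} [Field K] (n : ℕ) [NeZero n] (hn : 2 ≤ n)
    (ζ : K) (hζ : IsPrimitiveRoot ζ (2 ^ n - 1))
    (ε : K) (hε : IsPrimitiveRoot ε n)
    (c : Fin n → K) (hc0 : c ≠ 0) (hc : ∀ i : Fin n, c (i + 1) * c (i + 1) = c i)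
    (L : (Fin n → K) →ₗ[K] (Fin n → K))
    (hL : ∀ (x : Fin n → K) (i : Fin n), L x i = c (i + 1) * x (i + 1)) :
    L.charpoly = Polynomial.X ^ n - 1 ∧
    (∀ μ : K, Module.End.HasEigenvalue L μ ↔ ∃ p : ℕ, 1 ≤ p ∧ p ≤ n ∧ μ = ε ^ p) ∧
    (∀ p : ℕ, 1 ≤ p → p ≤ n →
      Module.finrank K (Module.End.eigenspace L (ε ^ p)) = 1) ∧
    (∀ x : Fin n → K, (L ^ n) x = x) :=
  stmt_13_general n ε hε c hc0 hc L hL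
end

section
/- For every integer s with 1 ≤ s ≤ n − 1, the sum over all k ∈ ℤ/(2^n − 1)ℤ of the s-th power of the left multiplication operator L_τ(c_k) is the zero endomorphism of Fin n → K: ∑_{k ∈ ℤ/(2^n−1)ℤ} (L_τ(c_k))^s = 0. -/
/-!
`L_τ(c_k)` is a weighted cyclic shift, so `(L_τ(c_k)^s x)(i) = (∏_{j<s} c_k(i+j+1)) x(i+s)`.
For the additive character `ψ a = ζ ^ a.val` of `ZMod (2^n - 1)` we have `c_k(l) = ψ (2^(n-1-l) k)`,
so this weight is `ψ (k m)` with `m = ∑_{j<s} 2^(n-1-(i+j+1))`: a number whose binary expansion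
has exactly `s` ones among its lowest `n` digits. Since `0 < s < n`, `m` is not divisible by
`2^n - 1`, so `k ↦ ψ (k m)` is a nontrivial character and its sum over `k` vanishes.
-/

open Finset Fin.NatCast

theorem pow_apply_of_weighted_cyclic_shift {R : Type*} [CommSemiring R] {n : ℕ} [NeZero n]
    {T : Module.End R (Fin n → R)} {w : Fin n → R} (hT : ∀ x i, T x i = w (i + 1) * x (i + 1))
    (s : ℕ) (x : Fin n → R) (i : Fin n) :
    (T ^ s) x i = (∏ j ∈ range s, w (i + j + 1)) * x (i + s) := by
  induction s generalizing x with
  | zero => simp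
  | succ s ih =>
    rw [pow_succ, Module.End.mul_apply, ih, hT, prod_range_succ, Nat.cast_succ, ← add_assoc,
      mul_assoc]

theorem AddChar.map_sum_eq_prod {ι A M : Type*} [AddCommMonoid A] [CommMonoid M]
    (ψ : AddChar A M) (s : Finset ι) (f : ι → A) : ψ (∑ i ∈ s, f i) = ∏ i ∈ s, ψ (f i) := by
  classical
  induction s using Finset.induction with
  | empty => simp
  | insert a s ha ih => rw [sum_insert ha, prod_insert ha, map_add_eq_mul, ih]

theorem natCast_sum_two_pow_ne_zero {n : ℕ} {T : Finset ℕ} (hne : T.Nonempty)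
    (hT : T ⊂ range n) : ((∑ t ∈ T, 2 ^ t : ℕ) : ZMod (2 ^ n - 1)) ≠ 0 := by
  rw [Ne, ZMod.natCast_eq_zero_iff]
  have hpos : 0 < ∑ t ∈ T, 2 ^ t := sum_pos (fun _ _ ↦ by positivity) hne
  obtain ⟨t, ht, htT⟩ := exists_of_ssubset hT
  have hlt : ∑ t ∈ T, 2 ^ t < 2 ^ n - 1 :=
    calc ∑ t ∈ T, 2 ^ t < ∑ t ∈ range n, 2 ^ t :=
          sum_lt_sum_of_subset hT.subset ht htT (by positivity) (fun _ _ _ ↦ Nat.zero_le _)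
      _ = 2 ^ n - 1 := by simp [Nat.geomSum_eq le_rfl]
  exact fun h ↦ (Nat.le_of_dvd hpos h).not_gt hlt

theorem natCast_sum_two_pow_shift_ne_zero {n s : ℕ} [NeZero n] (i : Fin n) (hs1 : 1 ≤ s)
    (hs2 : s < n) :
    ((∑ j ∈ range s, 2 ^ (n - 1 - ((i + j + 1 : Fin n) : ℕ)) : ℕ) : ZMod (2 ^ n - 1)) ≠ 0 := by
  set e : ℕ → ℕ := fun j ↦ n - 1 - ((i + j + 1 : Fin n) : ℕ)
  have he : Set.InjOn e (range s) := by
    intro a ha b hb hab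
    have hval : ((i + a + 1 : Fin n) : ℕ) = ((i + b + 1 : Fin n) : ℕ) := by
      have := (i + a + 1).isLt
      have := (i + b + 1).isLt
      simp only [e] at hab
      omega
    have hcast : (a : Fin n) = b := add_left_cancel (add_right_cancel (Fin.ext hval))
    exact CharP.natCast_injOn_Iio (Fin n) n ((mem_range.mp ha).trans hs2)
      ((mem_range.mp hb).trans hs2) hcast
  rw [← sum_image he]
  refine natCast_sum_two_pow_ne_zero ((nonempty_range_iff.mpr (by omega)).image e)
    (ssubset_of_subset_of_ne ?_ ?_)
  · intro t ht
    obtain ⟨j, -, rfl⟩ := mem_image.mp ht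
    exact mem_range.mpr ((Nat.sub_le _ _).trans_lt (Nat.sub_lt (NeZero.pos n) one_pos))
  · intro h
    have hcard := congr_arg card h
    rw [card_image_of_injOn he, card_range, card_range] at hcard
    omega

theorem stmt_14_general {K : Type*} [Field K] (n : ℕ) [NeZero n] [NeZero (2 ^ n - 1)]
    (ζ : K) (hζ : IsPrimitiveRoot ζ (2 ^ n - 1))
    (c : ZMod (2 ^ n - 1) → Fin n → K)
    (hc : ∀ k (i : Fin n), c k i = ζ ^ ((2 ^ (n - 1 - (i : ℕ)) * k : ZMod (2 ^ n - 1)).val))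
    (L : ZMod (2 ^ n - 1) → Module.End K (Fin n → K))
    (hL : ∀ k (x : Fin n → K) (i : Fin n), L k x i = c k (i + 1) * x (i + 1))
    (s : ℕ) (hs1 : 1 ≤ s) (hs2 : s ≤ n - 1) :
    ∑ k : ZMod (2 ^ n - 1), (L k) ^ s = 0 := by
  set ψ := AddChar.zmodChar (2 ^ n - 1) hζ.pow_eq_one
  have hψ : ψ.IsPrimitive := AddChar.zmodChar_primitive_of_primitive_root _ hζ
  refine LinearMap.ext fun x ↦ funext fun i ↦ ?_
  simp only [LinearMap.sum_apply, Finset.sum_apply, pow_apply_of_weighted_cyclic_shift (hL _),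
    ← sum_mul, LinearMap.zero_apply, Pi.zero_apply]
  set m : ℕ := ∑ j ∈ range s, 2 ^ (n - 1 - ((i + j + 1 : Fin n) : ℕ))
  have hweight : ∀ k, ∏ j ∈ range s, c k (i + j + 1) = ψ (k * m) := by
    intro k
    rw [Nat.cast_sum, mul_sum, AddChar.map_sum_eq_prod]
    refine prod_congr rfl fun j _ ↦ ?_
    rw [hc, mul_comm, Nat.cast_pow, Nat.cast_ofNat]
    rfl
  have hm : (m : ZMod (2 ^ n - 1)) ≠ 0 := natCast_sum_two_pow_shift_ne_zero i hs1 (by omega)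
  simp only [hweight, AddChar.sum_mulShift _ hψ, if_neg hm, Nat.cast_zero, zero_mul]

/-- For `1 ≤ s ≤ n − 1`, the sum over all `k ∈ ℤ/(2^n − 1)ℤ` of the `s`-th power of the
left multiplication operators `L_τ(c_k)` vanishes. -/
theorem stmt_14 {K : Type*} [Field K] (n : ℕ) [NeZero n] [NeZero (2 ^ n - 1)] (hn : 2 ≤ n)
    (ζ : K) (hζ : IsPrimitiveRoot ζ (2 ^ n - 1))
    (c : ZMod (2 ^ n - 1) → Fin n → K)
    (hc : ∀ k (i : Fin n), c k i = ζ ^ ((2 ^ (n - 1 - (i : ℕ)) * k : ZMod (2 ^ n - 1)).val))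
    (L : ZMod (2 ^ n - 1) → Module.End K (Fin n → K))
    (hL : ∀ k (x : Fin n → K) (i : Fin n), L k x i = c k (i + 1) * x (i + 1))
    (s : ℕ) (hs1 : 1 ≤ s) (hs2 : s ≤ n - 1) :
    ∑ k : ZMod (2 ^ n - 1), (L k) ^ s = 0 :=
  stmt_14_general n ζ hζ c hc L hL s hs1 hs2
end

section
/- Assume in addition that 2^n − 1 is nonzero in K (i.e. the characteristic of K does not divide 2^n − 1). Then the K-linear span of the set of nonzero idempotents {c_k : k ∈ ℤ/(2^n − 1)ℤ} of •_τ is all of Fin n → K. -/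
/-!
The vectors `c k` are the columns of the `n × (2^n - 1)` matrix whose `i`-th row is the additive
character `k ↦ ζ ^ (2^(n-1-i) k)` of `ZMod (2^n - 1)`. Since `2` has order `n` modulo `2^n - 1`,
these `n` characters are distinct, hence linearly independent by Dedekind's lemma; so the matrix
has rank `n` and its columns span `Fin n → K`.
-/

theorem linearIndependent_addChar (A L : Type*) [AddMonoid A] [CommRing L] [IsDomain L] :
    LinearIndependent L (fun ψ : AddChar A L => (ψ : A → L)) := by
  exact ((linearIndependent_monoidHom (Multiplicative A) L).comp _
    AddChar.toMonoidHomEquiv.injective).map'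
      (LinearEquiv.funCongrLeft L L Multiplicative.ofAdd).toLinearMap (LinearEquiv.ker _)

theorem Matrix.span_col_eq_top_of_linearIndependent_row {m n K : Type*} [Field K] [Fintype m]
    [Fintype n] {M : Matrix m n K} (h : LinearIndependent K M.row) :
    Submodule.span K (Set.range M.col) = ⊤ :=
  Submodule.eq_top_of_finrank_eq <| by
    rw [← Matrix.rank_eq_finrank_span_cols, h.rank_matrix, Module.finrank_fintype_fun_eq_card]

theorem AddChar.IsPrimitive.span_eq_top_of_injective {R K ι : Type*} [CommRing R] [Fintype R]
    [Field K] [Fintype ι] {ψ : AddChar R K} (hψ : ψ.IsPrimitive) {m : ι → R}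
    (hm : Function.Injective m) :
    Submodule.span K (Set.range fun k i => ψ (m i * k)) = ⊤ :=
  Matrix.span_col_eq_top_of_linearIndependent_row (M := Matrix.of fun i k => ψ (m i * k)) <|
    (linearIndependent_addChar R K).comp (fun i => ψ.mulShift (m i))
      ((AddChar.to_mulShift_inj_of_isPrimitive hψ).comp hm)

theorem ZMod.orderOf_natCast_pow_sub_one {a : ℕ} (ha : 1 < a) {n : ℕ} (hn : n ≠ 0) :
    orderOf (a : ZMod (a ^ n - 1)) = n := by
  have hpow (m : ℕ) : (a : ZMod (a ^ n - 1)) ^ m = 1 ↔ a ^ n - 1 ∣ a ^ m - 1 := by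
    rw [← ZMod.natCast_eq_zero_iff, Nat.cast_sub (Nat.one_le_pow _ _ (by omega)), sub_eq_zero]
    push_cast
    rfl
  refine (orderOf_eq_iff (Nat.pos_of_ne_zero hn)).2 ⟨(hpow n).2 dvd_rfl, fun m hmn hm0 h => ?_⟩
  have hlt : a ^ m < a ^ n := Nat.pow_lt_pow_right ha hmn
  have hone : 1 < a ^ m := Nat.one_lt_pow (by omega) ha
  have := Nat.le_of_dvd (by omega) ((hpow m).1 h)
  omega

theorem stmt_15_general {K : Type*} [Field K] (n : ℕ) [NeZero n]
    (ζ : K) (hζ : IsPrimitiveRoot ζ (2 ^ n - 1))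
    (c : ZMod (2 ^ n - 1) → Fin n → K)
    (hc : ∀ k (i : Fin n), c k i = ζ ^ ((2 ^ (n - 1 - (i : ℕ)) * k : ZMod (2 ^ n - 1)).val)) :
    Submodule.span K (Set.range c) = ⊤ := by
  have : NeZero (2 ^ n - 1) := ⟨by have := Nat.one_lt_two_pow (NeZero.ne n); omega⟩
  have hord : orderOf (2 : ZMod (2 ^ n - 1)) = n := by
    exact_mod_cast ZMod.orderOf_natCast_pow_sub_one one_lt_two (NeZero.ne n)
  have hexp : Function.Injective fun i : Fin n => (2 : ZMod (2 ^ n - 1)) ^ (n - 1 - (i : ℕ)) := by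
    intro i j hij
    have hlt (l : Fin n) : n - 1 - (l : ℕ) ∈ Set.Iio (orderOf (2 : ZMod (2 ^ n - 1))) := by
      rw [Set.mem_Iio, hord]; omega
    have := pow_injOn_Iio_orderOf (hlt i) (hlt j) hij
    omega
  have hc' : c = fun k (i : Fin n) =>
      AddChar.zmodChar _ hζ.pow_eq_one ((2 : ZMod _) ^ (n - 1 - (i : ℕ)) * k) := by
    funext k i
    exact hc k i
  rw [hc']
  exact (AddChar.zmodChar_primitive_of_primitive_root _ hζ).span_eq_top_of_injective hexp

/-- If `2^n − 1 ≠ 0` in `K`, the nonzero idempotents `c_k` of the cyclic-shift isotope span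
`Fin n → K` over `K`. -/
theorem stmt_15 {K : Type*} [Field K] (n : ℕ) [NeZero n] (hn : 2 ≤ n)
    (hchar : ((2 ^ n - 1 : ℕ) : K) ≠ 0)
    (ζ : K) (hζ : IsPrimitiveRoot ζ (2 ^ n - 1))
    (c : ZMod (2 ^ n - 1) → Fin n → K)
    (hc : ∀ k (i : Fin n), c k i = ζ ^ ((2 ^ (n - 1 - (i : ℕ)) * k : ZMod (2 ^ n - 1)).val)) :
    Submodule.span K (Set.range c) = ⊤ :=
  stmt_15_general n ζ hζ c hc
end

section
/- Assume in addition that K contains a primitive n-th root of unity ε. Let c be an idempotent of •_τ and let p, q be natural numbers. If x, y ∈ Fin n → K satisfy c •_τ x = ε^p · x and c •_τ y = ε^q · y, then c •_τ (x •_τ y) = ε^(p+q) · (x •_τ y). In other words, the ε-eigenspaces of L_τ(c) obey the cyclic fusion law A_{ε^p} •_τ A_{ε^q} ⊆ A_{ε^{p+q}}. -/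
/-- Fusion law for the cyclic-shift isotope: if `x` and `y` are eigenvectors of `L_τ(c)`
(for an idempotent `c` of `•_τ`) with eigenvalues `ε^p` and `ε^q`, then `x •_τ y` is an
eigenvector with eigenvalue `ε^(p+q)`. -/
theorem stmt_16 {K : Type*} [Field K] (n : ℕ) [NeZero n] (hn : 2 ≤ n)
    (ε : K) (hε : IsPrimitiveRoot ε n)
    (c : Fin n → K) (hc : ∀ i : Fin n, c (i + 1) * c (i + 1) = c i)
    (p q : ℕ) (x y : Fin n → K)
    (hx : ∀ i : Fin n, c (i + 1) * x (i + 1) = ε ^ p * x i)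
    (hy : ∀ i : Fin n, c (i + 1) * y (i + 1) = ε ^ q * y i) :
    ∀ i : Fin n, c (i + 1) * (x (i + 1 + 1) * y (i + 1 + 1)) =
      ε ^ (p + q) * (x (i + 1) * y (i + 1)) := by
  intro i
  linear_combination (-(x (i+1+1) * y (i+1+1))) * hc (i+1)
    + (c (i+1+1) * y (i+1+1)) * hx (i+1) + (ε ^ p * x (i+1)) * hy (i+1)
end

section
/- Let K be a field, n a natural number, and σ a permutation of Fin n. Assume that for every length s occurring in the cycle type of σ, K contains a primitive (2^s − 1)-th root of unity. On Fin n → K define (x •_σ y)(i) = x(σ(i))·y(σ(i)). Then the set of idempotents of •_σ, i.e. {c : Fin n → K | c(σ(i))² = c(i) for all i ∈ Fin n}, has exactly 2^n elements. -/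
/-!
Writing `τ = σ⁻¹`, the idempotent equation says `c (τ i) = c i ^ 2`, i.e. `c` semiconjugates `τ`
to squaring. Such a `c` is determined on each cycle of `τ` by its value `x` at one point of the
cycle, and `x` can be any solution of `x ^ 2 ^ s = x`, `s` the length of the cycle: then
`τ^[k] i ↦ x ^ 2 ^ k` is well defined. These solutions are `0` and the `(2 ^ s - 1)`-th roots of
unity, `2 ^ s` of them when a primitive one exists, so there are `∏ 2 ^ s = 2 ^ n` idempotents.
-/

open Function Finset

section OrbitExtend

variable {α β : Type*} {τ : α → α} {f : β → β} {x : α} {y : β}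

theorem Function.IsPeriodicPt.iterate_eq_iterate_of_iterate_eq
    (hy : IsPeriodicPt f (minimalPeriod τ x) y) (hx : x ∈ periodicPts τ) {a b : ℕ}
    (h : τ^[a] x = τ^[b] x) : f^[a] y = f^[b] y := by
  have hp := minimalPeriod_pos_of_mem_periodicPts hx
  have hmod : a % minimalPeriod τ x = b % minimalPeriod τ x := by
    apply iterate_injOn_Iio_minimalPeriod (Nat.mod_lt a hp) (Nat.mod_lt b hp)
    simpa only [iterate_mod_minimalPeriod_eq] using h
  rw [← hy.iterate_mod_apply a, hmod, hy.iterate_mod_apply]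

open Classical in
noncomputable def orbitExtend (τ : α → α) (f : β → β) (x : α) (y : β) (z : α) : β :=
  if h : ∃ k, τ^[k] x = z then f^[h.choose] y else y

theorem orbitExtend_of_iterate_eq (hx : x ∈ periodicPts τ)
    (hy : IsPeriodicPt f (minimalPeriod τ x) y) {k : ℕ} {z : α} (hk : τ^[k] x = z) :
    orbitExtend τ f x y z = f^[k] y := by
  have h : ∃ j, τ^[j] x = z := ⟨k, hk⟩
  rw [orbitExtend, dif_pos h]
  exact hy.iterate_eq_iterate_of_iterate_eq hx (h.choose_spec.trans hk.symm)

end OrbitExtend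

namespace Equiv.Perm

variable {α β : Type*} (τ : Perm α)

theorem mem_orbit_zpowers_iff {x y : α} :
    y ∈ MulAction.orbit (Subgroup.zpowers τ) x ↔ τ.SameCycle x y := by
  rw [MulAction.mem_orbit_iff]
  constructor
  · rintro ⟨⟨_, k, rfl⟩, rfl⟩
    exact ⟨k, rfl⟩
  · rintro ⟨k, rfl⟩
    exact ⟨⟨τ ^ k, k, rfl⟩, rfl⟩

section Finite

variable [Finite α]

theorem mem_periodicPts (x : α) : x ∈ periodicPts τ :=
  mk_mem_periodicPts (orderOf_pos τ) <| by
    rw [IsPeriodicPt, IsFixedPt, ← coe_pow, pow_orderOf_eq_one, one_apply]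

theorem card_sameCycle (x : α) : Nat.card {y // τ.SameCycle x y} = minimalPeriod τ x := by
  have := Fintype.ofFinite α
  classical
  rw [show (⇑τ) = (τ • ·) from rfl, MulAction.minimalPeriod_eq_card, ← Nat.card_eq_fintype_card]
  exact Nat.card_congr (Equiv.subtypeEquivRight fun y => τ.mem_orbit_zpowers_iff.symm)

theorem sum_minimalPeriod_out [Fintype (Quotient (SameCycle.setoid τ))] :
    ∑ q : Quotient (SameCycle.setoid τ), minimalPeriod τ q.out = Nat.card α := by
  calc ∑ q : Quotient (SameCycle.setoid τ), minimalPeriod τ q.out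
      = ∑ q, Nat.card {i // Quotient.mk _ i = q} := by
        refine Finset.sum_congr rfl fun q _ => ?_
        rw [← card_sameCycle]
        exact Nat.card_congr (Equiv.subtypeEquivRight fun i =>
          (Quotient.mk_eq_iff_out.trans sameCycle_comm).symm)
    _ = Nat.card α := by rw [← Nat.card_sigma, Nat.card_congr (Equiv.sigmaFiberEquiv _)]

theorem exists_iterate_out_eq (i : α) :
    ∃ k, τ^[k] (Quotient.mk (SameCycle.setoid τ) i).out = i := by
  obtain ⟨k, hk⟩ := (Quotient.mk_out (s := SameCycle.setoid τ) i).exists_nat_pow_eq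
  exact ⟨k, by rwa [← coe_pow]⟩

end Finite

theorem minimalPeriod_mem_cycleType [Fintype α] [DecidableEq α] {x : α} (hx : τ x ≠ x) :
    minimalPeriod τ x ∈ τ.cycleType := by
  have hcard : #(τ.cycleOf x).support = minimalPeriod τ x := by
    rw [← card_sameCycle, ← Nat.card_eq_finsetCard]
    exact Nat.card_congr (Equiv.subtypeEquivRight fun y => mem_support_cycleOf_iff' hx)
  rw [cycleType_def, ← hcard]
  exact Multiset.mem_map_of_mem _ (cycleOf_mem_cycleFactorsFinset_iff.2 (mem_support.2 hx))

section Semiconj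

variable [Finite α] {f : β → β}

theorem semiconj_orbitExtend (g : ∀ q : Quotient (SameCycle.setoid τ),
      {y // IsPeriodicPt f (minimalPeriod τ q.out) y}) :
    Semiconj (fun i => orbitExtend τ f (Quotient.mk (SameCycle.setoid τ) i).out
      (g (Quotient.mk _ i)) i) τ f := by
  intro i
  have hclass : Quotient.mk (SameCycle.setoid τ) (τ i) = Quotient.mk _ i :=
    Quotient.sound (sameCycle_apply_left.2 (SameCycle.refl τ i))
  obtain ⟨k, hk⟩ := τ.exists_iterate_out_eq i
  dsimp only
  rw [hclass, orbitExtend_of_iterate_eq (τ.mem_periodicPts _) (g _).2 hk,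
    orbitExtend_of_iterate_eq (τ.mem_periodicPts _) (g _).2 (k := k + 1)
      (by rw [iterate_succ_apply', hk]), iterate_succ_apply']

variable (f) in
noncomputable def semiconjEquivPi :
    {c : α → β // Semiconj c τ f} ≃
      ∀ q : Quotient (SameCycle.setoid τ), {y // IsPeriodicPt f (minimalPeriod τ q.out) y} where
  toFun c q := ⟨c.1 q.out, (isPeriodicPt_minimalPeriod τ q.out).map c.2⟩
  invFun g := ⟨_, τ.semiconj_orbitExtend g⟩
  left_inv c := by
    ext i
    obtain ⟨k, hk⟩ := τ.exists_iterate_out_eq i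
    dsimp only
    rw [orbitExtend_of_iterate_eq (τ.mem_periodicPts _)
      ((isPeriodicPt_minimalPeriod τ _).map c.2) hk, ← (c.2.iterate_right k).eq, hk]
  right_inv g := by
    ext q
    dsimp only
    rw [Quotient.out_eq q]
    exact orbitExtend_of_iterate_eq (τ.mem_periodicPts _) (g q).2 (k := 0) rfl

theorem card_semiconj_eq_pow {b : ℕ}
    (h : ∀ x, Nat.card {y // IsPeriodicPt f (minimalPeriod τ x) y} = b ^ minimalPeriod τ x) :
    Nat.card {c : α → β // Semiconj c τ f} = b ^ Nat.card α := by
  have := Fintype.ofFinite (Quotient (SameCycle.setoid τ))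
  rw [Nat.card_congr (τ.semiconjEquivPi f), Nat.card_pi, ← sum_minimalPeriod_out τ,
    ← Finset.prod_pow_eq_pow_sum]
  exact Finset.prod_congr rfl fun q _ => h q.out

end Semiconj

end Equiv.Perm

theorem IsPrimitiveRoot.ncard_setOf_pow_succ_eq_self {R : Type*} [CommRing R] [IsDomain R]
    {ζ : R} {k : ℕ} (hζ : IsPrimitiveRoot ζ k) (hk : 0 < k) :
    {x : R | x ^ (k + 1) = x}.ncard = k + 1 := by
  classical
  have hset : {x : R | x ^ (k + 1) = x} = insert 0 (Polynomial.nthRootsFinset k (1 : R)) := by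
    ext x
    rw [Set.mem_ofPred_eq, pow_succ, mul_left_eq_self₀, coe_insert,
      Polynomial.nthRootsFinset_toSet hk]
    exact or_comm
  rw [hset, Set.ncard_coe_finset, card_insert_of_notMem, hζ.card_nthRootsFinset]
  exact fun h => Polynomial.ne_zero_of_mem_nthRootsFinset one_ne_zero h rfl

theorem card_isPeriodicPt_sq {R : Type*} [CommRing R] [IsDomain R] {s : ℕ} (hs : 0 < s)
    {ζ : R} (hζ : IsPrimitiveRoot ζ (2 ^ s - 1)) :
    Nat.card {y : R // IsPeriodicPt (· ^ 2) s y} = 2 ^ s := by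
  have hpow : 2 ^ s - 1 + 1 = 2 ^ s := Nat.sub_add_cancel Nat.one_le_two_pow
  have hk : 0 < 2 ^ s - 1 := by have := Nat.one_lt_two_pow hs.ne'; omega
  rw [← hpow, ← hζ.ncard_setOf_pow_succ_eq_self hk, ← Nat.card_coe_set_eq, hpow]
  exact Nat.card_congr (Equiv.subtypeEquivRight fun y => by
    rw [IsPeriodicPt, IsFixedPt, pow_iterate]; rfl)

/-- If `K` contains a primitive `(2^s − 1)`-th root of unity for every cycle length `s` of
the permutation `σ`, then the inner isotope `(Fin n → K, •_σ)` has exactly `2^n`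
idempotents. -/
theorem stmt_17 {K : Type*} [Field K] (n : ℕ) (σ : Equiv.Perm (Fin n))
    (hK : ∀ s ∈ σ.cycleType, ∃ ζ : K, IsPrimitiveRoot ζ (2 ^ s - 1)) :
    Set.ncard {c : Fin n → K | ∀ i : Fin n, c (σ i) ^ 2 = c i} = 2 ^ n := by
  have hperiodic (x : Fin n) : Nat.card {y : K // IsPeriodicPt (· ^ 2) (minimalPeriod ⇑σ⁻¹ x) y}
      = 2 ^ minimalPeriod ⇑σ⁻¹ x := by
    obtain ⟨ζ, hζ⟩ : ∃ ζ : K, IsPrimitiveRoot ζ (2 ^ minimalPeriod ⇑σ⁻¹ x - 1) := by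
      by_cases hx : σ⁻¹ x = x
      · rw [minimalPeriod_eq_one_iff_isFixedPt.2 hx]
        exact ⟨1, IsPrimitiveRoot.one⟩
      · exact hK _ (σ.cycleType_inv ▸ σ⁻¹.minimalPeriod_mem_cycleType hx)
    exact card_isPeriodicPt_sq (minimalPeriod_pos_of_mem_periodicPts (σ⁻¹.mem_periodicPts x)) hζ
  have hidem : {c : Fin n → K | ∀ i, c (σ i) ^ 2 = c i} = {c | Semiconj c ⇑σ⁻¹ (· ^ 2)} := by
    ext c
    refine ⟨fun h i => ?_, fun h i => ?_⟩
    · simpa using (h (σ⁻¹ i)).symm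
    · simpa using (h (σ i)).symm
  rw [hidem, ← Nat.card_coe_set_eq]
  exact (σ⁻¹.card_semiconj_eq_pow hperiodic).trans (congrArg _ (Nat.card_fin n))
end

section
/- Let n ≥ 2 and N = 2^n − 1, and let ⊛ be the operation i ⊛ j := 2^(n−1)·(i + j) on ℤ/Nℤ. A map g : ℤ/Nℤ → ℤ/Nℤ is a bijection satisfying g(i ⊛ j) = g(i) ⊛ g(j) for all i, j if and only if there exist a unit m of the ring ℤ/Nℤ and an element k ∈ ℤ/Nℤ such that g(i) = m·i + k for all i. Consequently, the automorphism group of the idempotent quasigroup (ℤ/Nℤ, ⊛) is the affine group of ℤ/Nℤ, the semidirect product of (ℤ/Nℤ, +) by its unit group. -/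
/-!
Since `2c = 1`, specialising `j = 0` turns `g (c (i + j)) = c (g i + g j)` into Jensen's equation
`g (i + j) + g 0 = g i + g j`, so `g - g 0` is additive. Every additive endomorphism of `ℤ/Nℤ` is
multiplication by its value at `1`, hence `g` is affine, and its slope is a unit because `g` is
surjective. Conversely affine maps preserve `⊛`, and composing affine maps multiplies slopes.
-/

section Affine

variable {R : Type*} [CommRing R]

@[simps apply]
def affinePerm (m : Rˣ) (k : R) : Equiv.Perm R where
  toFun i := m * i + k
  invFun i := (m⁻¹ : Rˣ) * (i - k)
  left_inv i := by simp
  right_inv i := by simp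

theorem affinePerm_mul (m m' : Rˣ) (k k' : R) :
    affinePerm m k * affinePerm m' k' = affinePerm (m * m') (m * k' + k) :=
  Equiv.ext fun i => by simp only [Equiv.Perm.mul_apply, affinePerm_apply, Units.val_mul]; ring

theorem affinePerm_injective : Function.Injective fun p : Rˣ × R => affinePerm p.1 p.2 := by
  rintro ⟨m, k⟩ ⟨m', k'⟩ h
  have hk : k = k' := by simpa using congrArg (· 0) h
  have hm : (m : R) = m' := by simpa [hk] using congrArg (· 1) h
  exact Prod.ext (Units.ext hm) hk

theorem isUnit_of_surjective_mul_add {m k : R} (h : Function.Surjective fun x => m * x + k) :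
    IsUnit m := by
  obtain ⟨y, hy⟩ := h (1 + k)
  exact .of_mul_eq_one y (add_right_cancel hy)

variable {c : R}

theorem mul_add_map_half_add (hc : 2 * c = 1) (m k i j : R) :
    m * (c * (i + j)) + k = c * ((m * i + k) + (m * j + k)) := by
  linear_combination (-k) * hc

theorem map_add_add_map_zero_of_map_half_add (hc : 2 * c = 1) {g : R → R}
    (hg : ∀ i j, g (c * (i + j)) = c * (g i + g j)) (i j : R) :
    g (i + j) + g 0 = g i + g j := by
  have hhalf : g (c * (i + j)) = c * (g (i + j) + g 0) := by simpa using hg (i + j) 0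
  have hdouble := congrArg (2 * ·) (hhalf.symm.trans (hg i j))
  simp only [← mul_assoc, hc, one_mul] at hdouble
  exact hdouble

end Affine

namespace ZMod

variable {N : ℕ}

theorem two_mul_two_pow_pred {n : ℕ} (hn : 1 ≤ n) : (2 : ZMod (2 ^ n - 1)) * 2 ^ (n - 1) = 1 := by
  have h : ((2 ^ n - 1 : ℕ) : ZMod (2 ^ n - 1)) = 0 := ZMod.natCast_self _
  rw [Nat.cast_sub Nat.one_le_two_pow, sub_eq_zero] at h
  rw [← pow_succ', Nat.sub_add_cancel hn]
  exact_mod_cast h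

theorem eq_mul_add_of_map_add_add_map_zero {f : ZMod N → ZMod N}
    (hf : ∀ i j, f (i + j) + f 0 = f i + f j) (i : ZMod N) : f i = (f 1 - f 0) * i + f 0 := by
  let F : ZMod N →+ ZMod N := AddMonoidHom.mk' (fun i => f i - f 0) fun i j => by
    linear_combination hf i j
  have hF : F i = i * F 1 := by simpa using ZMod.map_smul F i 1
  simp only [F, AddMonoidHom.mk'_apply] at hF
  linear_combination hF

variable {c : ZMod N}

theorem perm_map_half_add_iff (hc : 2 * c = 1) (g : Equiv.Perm (ZMod N)) :
    (∀ i j, g (c * (i + j)) = c * (g i + g j)) ↔ ∃ (m : (ZMod N)ˣ) (k : ZMod N), ∀ i, g i = m * i + k := by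
  constructor
  · intro hg
    have hlin := eq_mul_add_of_map_add_add_map_zero (map_add_add_map_zero_of_map_half_add hc hg)
    have hunit : IsUnit (g 1 - g 0) :=
      isUnit_of_surjective_mul_add (k := g 0) fun y => by
        simpa only [← hlin] using g.surjective y
    exact ⟨hunit.unit, g 0, hlin⟩
  · rintro ⟨m, k, hg⟩ i j
    simp only [hg, mul_add_map_half_add hc]

/-- The automorphisms of `(ℤ/Nℤ, ⊛)` with `i ⊛ j = c (i + j)`, labelled by slope and intercept. -/
noncomputable def halfAddAutEquiv (hc : 2 * c = 1) :
    {g : Equiv.Perm (ZMod N) // ∀ i j, g (c * (i + j)) = c * (g i + g j)} ≃ (ZMod N)ˣ × ZMod N :=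
  (Equiv.ofBijective (fun p => ⟨affinePerm p.1 p.2, fun i j => mul_add_map_half_add hc _ _ i j⟩)
    ⟨fun _ _ h => affinePerm_injective (congrArg Subtype.val h), fun g => by
      obtain ⟨m, k, hg⟩ := (perm_map_half_add_iff hc g.1).mp g.2
      exact ⟨(m, k), Subtype.ext (Equiv.ext fun i => (hg i).symm)⟩⟩).symm

theorem halfAddAutEquiv_symm_apply (hc : 2 * c = 1) (p : (ZMod N)ˣ × ZMod N) :
    ((halfAddAutEquiv hc).symm p).1 = affinePerm p.1 p.2 :=
  rfl

theorem halfAddAutEquiv_of_comp (hc : 2 * c = 1)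
    {f g h : {g : Equiv.Perm (ZMod N) // ∀ i j, g (c * (i + j)) = c * (g i + g j)}}
    (hcomp : ∀ x, h.1 x = f.1 (g.1 x)) :
    halfAddAutEquiv hc h =
      ((halfAddAutEquiv hc f).1 * (halfAddAutEquiv hc g).1,
        (halfAddAutEquiv hc f).1 * (halfAddAutEquiv hc g).2 + (halfAddAutEquiv hc f).2) := by
  rw [← Equiv.eq_symm_apply, Subtype.ext_iff, halfAddAutEquiv_symm_apply,
    ← affinePerm_mul, ← halfAddAutEquiv_symm_apply hc, ← halfAddAutEquiv_symm_apply hc,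
    Equiv.symm_apply_apply, Equiv.symm_apply_apply]
  exact Equiv.ext hcomp

end ZMod

/-- The automorphisms of the idempotent quasigroup `(ℤ/(2^n−1)ℤ, ⊛)`,
`i ⊛ j = 2^(n−1)(i+j)`, are exactly the affine maps `i ↦ m·i + k` with `m` a unit;
consequently the automorphism group is the affine group of `ℤ/(2^n−1)ℤ`, i.e. the
semidirect product of `(ℤ/(2^n−1)ℤ, +)` by its unit group (encoded here via the affine
composition law `ψ_{m,k} ∘ ψ_{m',k'} = ψ_{mm', mk'+k}`). -/
theorem stmt_18 (n : ℕ) (hn : 2 ≤ n) :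
    (∀ g : Equiv.Perm (ZMod (2 ^ n - 1)),
      (∀ i j : ZMod (2 ^ n - 1), g (2 ^ (n - 1) * (i + j)) = 2 ^ (n - 1) * (g i + g j)) ↔
      ∃ (m : (ZMod (2 ^ n - 1))ˣ) (k : ZMod (2 ^ n - 1)),
        ∀ i : ZMod (2 ^ n - 1), g i = (m : ZMod (2 ^ n - 1)) * i + k) ∧
    ∃ e : {g : Equiv.Perm (ZMod (2 ^ n - 1)) //
            ∀ i j : ZMod (2 ^ n - 1), g (2 ^ (n - 1) * (i + j)) = 2 ^ (n - 1) * (g i + g j)} ≃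
          ((ZMod (2 ^ n - 1))ˣ × ZMod (2 ^ n - 1)),
      ∀ f g h : {g : Equiv.Perm (ZMod (2 ^ n - 1)) //
            ∀ i j : ZMod (2 ^ n - 1), g (2 ^ (n - 1) * (i + j)) = 2 ^ (n - 1) * (g i + g j)},
        (∀ x, h.1 x = f.1 (g.1 x)) →
          (e h).1 = (e f).1 * (e g).1 ∧
          (e h).2 = ((e f).1 : ZMod (2 ^ n - 1)) * (e g).2 + (e f).2 := by
  have hc := ZMod.two_mul_two_pow_pred (n := n) (by omega)
  exact ⟨ZMod.perm_map_half_add_iff hc, ZMod.halfAddAutEquiv hc,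
    fun f g h hcomp => Prod.ext_iff.mp (ZMod.halfAddAutEquiv_of_comp hc hcomp)⟩
end

section
/- Let Λ_n(X) = X + X² + X⁴ + … + X^(2^(n−1)) = ∑_{i=0}^{n−1} X^(2^i) in K[X], and assume n is regular over K in the following sense: for every natural number m coprime to 2^n − 1 whose residue modulo 2^n − 1 is not of the form 2^q (0 ≤ q < n), the (2^n − 1)-th cyclotomic polynomial over K does not divide Λ_n(X^m) − Λ_n(X). Then every K-linear bijection f of Fin n → K satisfying f(x •_τ y) = f(x) •_τ f(y) for all x, y acts on the nonzero idempotents by an affine map with slope a power of 2: there exist q ∈ {0,…,n−1} and k ∈ ℤ/(2^n − 1)ℤ such that f(c_i) = c_{2^q·i + k} for every i ∈ ℤ/(2^n − 1)ℤ. Consequently the automorphism group of (Fin n → K, •_τ) is isomorphic to the semidirect product of ℤ/(2^n − 1)ℤ by ℤ/nℤ, where ℤ/nℤ acts by multiplication by powers of 2. -/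
set_option linter.unusedSectionVars false
set_option linter.unusedVariables false
set_option maxHeartbeats 1000000

open Polynomial

section StmtAux

variable {K : Type*} [Field K] {N : ℕ} [NeZero N] {ζ : K}

lemma stmt19_zpc (hζ : IsPrimitiveRoot ζ N) (m : ℕ) : ζ ^ m = ζ ^ ((m : ZMod N)).val := by
  conv_lhs => rw [← Nat.div_add_mod m N]
  rw [pow_add, pow_mul, hζ.pow_eq_one, one_pow, one_mul, ZMod.val_natCast]

lemma stmt19_valcast (x : ZMod N) : ((x.val : ℕ) : ZMod N) = x := by
  simp [ZMod.natCast_val, ZMod.cast_id]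

lemma stmt19_zp_add (hζ : IsPrimitiveRoot ζ N) (x y : ZMod N) :
    ζ ^ (x + y).val = ζ ^ x.val * ζ ^ y.val := by
  rw [← pow_add, stmt19_zpc hζ (x.val + y.val)]
  congr 2
  rw [Nat.cast_add, stmt19_valcast, stmt19_valcast]

lemma stmt19_zp_pow (hζ : IsPrimitiveRoot ζ N) (x : ZMod N) (i : ℕ) :
    ζ ^ ((x * (i : ZMod N)).val) = (ζ ^ x.val) ^ i := by
  rw [← pow_mul, stmt19_zpc hζ (x.val * i)]
  congr 2
  rw [Nat.cast_mul, stmt19_valcast]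

lemma stmt19_zp_inj (hζ : IsPrimitiveRoot ζ N) {x y : ZMod N}
    (h : ζ ^ x.val = ζ ^ y.val) : x = y := by
  have := hζ.pow_inj (ZMod.val_lt x) (ZMod.val_lt y) h
  rw [← stmt19_valcast x, ← stmt19_valcast y, this]

lemma stmt19_zp_ne (hζ : IsPrimitiveRoot ζ N) (m : ℕ) : ζ ^ m ≠ 0 := by
  have h0 : ζ ≠ 0 := by
    intro h
    have := hζ.pow_eq_one
    rw [h, zero_pow (NeZero.ne N)] at this
    exact zero_ne_one this
  exact pow_ne_zero _ h0

end StmtAux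

section StmtMain

variable {K : Type*} [Field K] {n : ℕ} [NeZero n] [NeZero (2 ^ n - 1)] {ζ : K}
variable {c : ZMod (2 ^ n - 1) → Fin n → K}

lemma stmt19_two_pow_n (n : ℕ) [NeZero (2 ^ n - 1)] : (2 : ZMod (2 ^ n - 1)) ^ n = 1 := by
  have h1 : (2 : ℕ) ^ n = (2 ^ n - 1) + 1 := (Nat.sub_add_cancel Nat.one_le_two_pow).symm
  calc (2 : ZMod (2 ^ n - 1)) ^ n = (((2 : ℕ) ^ n : ℕ) : ZMod (2 ^ n - 1)) := by push_cast; ring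
    _ = (((2 ^ n - 1) + 1 : ℕ) : ZMod (2 ^ n - 1)) := by rw [← h1]
    _ = 1 := by push_cast [ZMod.natCast_self]; ring

lemma stmt19_two_pow_mod (j : ℕ) : (2 : ZMod (2 ^ n - 1)) ^ j = 2 ^ (j % n) := by
  conv_lhs => rw [← Nat.div_add_mod j n]
  rw [pow_add, pow_mul, stmt19_two_pow_n, one_pow, one_mul]

lemma stmt19_two_pow_eq_of_modeq {j j' : ℕ} (h : j ≡ j' [MOD n]) :
    (2 : ZMod (2 ^ n - 1)) ^ j = 2 ^ j' := by
  rw [stmt19_two_pow_mod, h, ← stmt19_two_pow_mod]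

lemma stmt19_pow_lt_N (hn : 2 ≤ n) {q : ℕ} (hq : q < n) : 2 ^ q < 2 ^ n - 1 := by
  have h1 : 2 ≤ 2 ^ (n - 1) := by
    have := Nat.one_lt_two_pow_iff.mpr (show n - 1 ≠ 0 by omega)
    omega
  have h2 : (2 : ℕ) ^ n = 2 * 2 ^ (n - 1) := by
    rw [← pow_succ']; congr 1; omega
  have h3 : 2 ^ q ≤ 2 ^ (n - 1) := Nat.pow_le_pow_right (by norm_num) (by omega)
  omega

lemma stmt19_two_pow_inj (hn : 2 ≤ n) {q q' : ℕ} (hq : q < n) (hq' : q' < n)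
    (h : (2 : ZMod (2 ^ n - 1)) ^ q = 2 ^ q') : q = q' := by
  have key : ∀ r < n, ((2 : ZMod (2 ^ n - 1)) ^ r).val = 2 ^ r := by
    intro r hr
    have h1 : (2 : ZMod (2 ^ n - 1)) ^ r = (((2 : ℕ) ^ r : ℕ) : ZMod (2 ^ n - 1)) := by
      push_cast; ring
    rw [h1, ZMod.val_cast_of_lt (stmt19_pow_lt_N hn hr)]
  have h2 : (2 : ℕ) ^ q = 2 ^ q' := by rw [← key q hq, ← key q' hq', h]
  exact Nat.pow_right_injective (le_refl 2) h2

lemma stmt19_n_lt_N (hn : 2 ≤ n) : n < 2 ^ n - 1 := by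
  have key : ∀ m : ℕ, m + 2 + 2 ≤ 2 ^ (m + 2) := by
    intro m
    induction m with
    | zero => norm_num
    | succ t ih => rw [pow_succ]; omega
  have h1 := key (n - 2)
  have h2 : n - 2 + 2 = n := by omega
  rw [h2] at h1
  omega

variable (hc : ∀ k (i : Fin n), c k i = ζ ^ ((2 ^ (n - 1 - (i : ℕ)) * k : ZMod (2 ^ n - 1)).val))

include hc

lemma stmt19_c_mul (hζ : IsPrimitiveRoot ζ (2 ^ n - 1)) (a b : ZMod (2 ^ n - 1)) (i : Fin n) :
    c a i * c b i = c (a + b) i := by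
  rw [hc, hc, hc, ← stmt19_zp_add hζ]
  congr 2
  ring

lemma stmt19_c_shift (a : ZMod (2 ^ n - 1)) (l b : Fin n) :
    c a (l - b) = c (2 ^ (b : ℕ) * a) l := by
  rw [hc, hc]
  congr 2
  have goal2 : (2 : ZMod (2 ^ n - 1)) ^ (n - 1 - ((l - b : Fin n) : ℕ))
      = 2 ^ ((n - 1 - (l : ℕ)) + (b : ℕ)) := by
    apply stmt19_two_pow_eq_of_modeq
    have hA : ((l - b) + b) = l := sub_add_cancel l b
    have h1 : (((l - b : Fin n) : ℕ) + (b : ℕ)) % n = (l : ℕ) := by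
      rw [← Fin.val_add, hA]
    set u := ((l - b : Fin n) : ℕ) with hu
    set A := (l : ℕ) with hAv
    set B := (b : ℕ) with hB
    have hun : u < n := (l - b).isLt
    have hAn : A < n := l.isLt
    have hBn : B < n := b.isLt
    have hmod : (u + B) ≡ A [MOD n] := by
      unfold Nat.ModEq
      rw [h1, Nat.mod_eq_of_lt hAn]
    have hkey : (n - 1 - u) + (u + A) ≡ ((n - 1 - A) + B) + (u + A) [MOD n] := by
      calc (n - 1 - u) + (u + A) = (n - 1) + A := by omega
        _ ≡ (n - 1) + (u + B) [MOD n] := Nat.ModEq.add_left _ hmod.symm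
        _ = ((n - 1 - A) + B) + (u + A) := by omega
    exact Nat.ModEq.add_right_cancel' _ hkey
  rw [goal2, pow_add]
  ring

lemma stmt19_c_succ (hn : 2 ≤ n) (a : ZMod (2 ^ n - 1)) (l : Fin n) :
    c a (l + 1) = c (2 ^ (n - 1) * a) l := by
  have hb : l + 1 = l - (⟨n - 1, by omega⟩ : Fin n) := by
    rw [eq_sub_iff_add_eq]
    have h1 : (1 : Fin n) + (⟨n - 1, by omega⟩ : Fin n) = 0 := by
      apply Fin.ext
      rw [Fin.val_add, Fin.val_one']
      simp only [Fin.val_mk, Fin.val_zero]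
      have : 1 % n = 1 := Nat.mod_eq_of_lt (by omega)
      rw [this, show 1 + (n - 1) = n by omega, Nat.mod_self]
    rw [add_assoc, h1, add_zero]
  rw [hb, stmt19_c_shift hc]

lemma stmt19_c_sq (hn : 2 ≤ n) (hζ : IsPrimitiveRoot ζ (2 ^ n - 1)) (a : ZMod (2 ^ n - 1))
    (l : Fin n) : c a (l + 1) * c a (l + 1) = c a l := by
  rw [stmt19_c_mul hc hζ, stmt19_c_succ hc hn]
  congr 1
  have h1 : (2 : ZMod (2 ^ n - 1)) ^ (n - 1) * (a + a) = 2 ^ ((n - 1) + 1) * a := by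
    rw [pow_succ]; ring
  rw [h1, show n - 1 + 1 = n by omega, stmt19_two_pow_n, one_mul]

lemma stmt19_c_inj (hn : 2 ≤ n) (hζ : IsPrimitiveRoot ζ (2 ^ n - 1)) {a b : ZMod (2 ^ n - 1)}
    (h : c a = c b) : a = b := by
  have h1 := congrFun h ⟨n - 1, by omega⟩
  rw [hc, hc] at h1
  simp only [Fin.val_mk, Nat.sub_self, pow_zero, one_mul] at h1
  exact stmt19_zp_inj hζ h1

lemma stmt19_c_apply_ne (hζ : IsPrimitiveRoot ζ (2 ^ n - 1)) (a : ZMod (2 ^ n - 1)) (i : Fin n) :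
    c a i ≠ 0 := by
  rw [hc]; exact stmt19_zp_ne hζ _

lemma stmt19_c_ne_zero (hζ : IsPrimitiveRoot ζ (2 ^ n - 1)) (a : ZMod (2 ^ n - 1)) :
    c a ≠ 0 := by
  intro h
  exact stmt19_c_apply_ne hc hζ a ⟨0, Nat.pos_of_ne_zero (NeZero.ne n)⟩ (congrFun h _)

lemma stmt19_c_uniq (hn : 2 ≤ n) (hζ : IsPrimitiveRoot ζ (2 ^ n - 1)) {q q' : ℕ}
    (hq : q < n) (hq' : q' < n) {k k' : ZMod (2 ^ n - 1)}
    (h : ∀ i : ZMod (2 ^ n - 1), c (2 ^ q * i + k) = c (2 ^ q' * i + k')) :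
    k = k' ∧ q = q' := by
  have h0 := stmt19_c_inj hc hn hζ (h 0)
  simp only [mul_zero, zero_add] at h0
  have h1 := stmt19_c_inj hc hn hζ (h 1)
  rw [mul_one, mul_one, h0] at h1
  have h2 : (2 : ZMod (2 ^ n - 1)) ^ q = 2 ^ q' := add_right_cancel h1
  exact ⟨h0, stmt19_two_pow_inj hn hq hq' h2⟩

lemma stmt19_c_span (hn : 2 ≤ n) (hζ : IsPrimitiveRoot ζ (2 ^ n - 1)) :
    Submodule.span K (Set.range c) = ⊤ := by
  rw [eq_top_iff]
  intro x _
  set v : Fin n → K := fun l => ζ ^ (((2 : ZMod (2 ^ n - 1)) ^ (n - 1 - (l : ℕ))).val) with hv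
  set W := Matrix.vandermonde v with hW
  have hWc : ∀ j : Fin n, (fun l => W l j) = c (((j : ℕ) : ZMod (2 ^ n - 1))) := by
    intro j
    funext l
    show v l ^ (j : ℕ) = _
    rw [hc, stmt19_zp_pow hζ]
  have hvinj : Function.Injective v := by
    intro a b hab
    have h1 := stmt19_zp_inj hζ hab
    have h2 := stmt19_two_pow_inj hn (show n - 1 - (a : ℕ) < n by omega)
      (show n - 1 - (b : ℕ) < n by omega) h1
    have ha := a.isLt; have hb := b.isLt
    exact Fin.ext (by omega)
  have hdet : IsUnit W.det :=
    Ne.isUnit (Matrix.det_vandermonde_ne_zero_iff.mpr hvinj)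
  have hx : x = W.mulVec (W⁻¹.mulVec x) := by
    rw [Matrix.mulVec_mulVec, Matrix.mul_nonsing_inv _ hdet, Matrix.one_mulVec]
  have hsum : W.mulVec (W⁻¹.mulVec x)
      = ∑ j : Fin n, (W⁻¹.mulVec x) j • c (((j : ℕ) : ZMod (2 ^ n - 1))) := by
    funext l
    rw [Finset.sum_apply]
    simp only [Pi.smul_apply, smul_eq_mul]
    show ∑ j, W l j * (W⁻¹.mulVec x) j = _
    apply Finset.sum_congr rfl
    intro j _
    rw [← hWc j]
    ring
  rw [hx, hsum]
  apply Submodule.sum_mem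
  intro j _
  exact Submodule.smul_mem _ _ (Submodule.subset_span ⟨_, rfl⟩)

lemma stmt19_idem_eq_c (hn : 2 ≤ n) (hζ : IsPrimitiveRoot ζ (2 ^ n - 1)) {d : Fin n → K}
    (hd : ∀ i, d i = d (i + 1) * d (i + 1)) (hd0 : d ≠ 0) : ∃ k, d = c k := by
  have npos : 0 < n := by omega
  have hne : ∀ i, d i ≠ 0 := by
    by_contra hcon
    push_neg at hcon
    obtain ⟨i0, hi0⟩ := hcon
    apply hd0
    funext i
    have key : ∀ t : ℕ, ∀ b : Fin n, (b : ℕ) = t → d (i0 - b) = 0 := by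
      intro t
      induction t with
      | zero =>
        intro b hb
        have : b = 0 := Fin.ext (by simpa using hb)
        rw [this, sub_zero, hi0]
      | succ t ih =>
        intro b hb
        have hbn : t + 1 < n := hb ▸ b.isLt
        set b' : Fin n := ⟨t, by omega⟩ with hb'
        have hbeq : b = b' + 1 := by
          apply Fin.ext
          rw [Fin.val_add, Fin.val_one']
          rw [Nat.mod_eq_of_lt (show 1 < n by omega), Nat.mod_eq_of_lt (by omega), hb]
        rw [hbeq, show i0 - (b' + 1) = (i0 - b') - 1 from by rw [sub_add_eq_sub_sub]]
        rw [hd ((i0 - b') - 1), sub_add_cancel, ih b' rfl]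
        ring
    rw [show i = i0 - (i0 - i) from (sub_sub_cancel i0 i).symm]
    exact (key _ (i0 - i) rfl).symm ▸ key _ (i0 - i) rfl
  set w := d ⟨n - 1, by omega⟩ with hw
  have hpow : ∀ t, t < n → d ⟨n - 1 - t, by omega⟩ = w ^ (2 ^ t) := by
    intro t
    induction t with
    | zero =>
      intro _
      simp only [Nat.sub_zero, pow_zero, pow_one, hw]
    | succ t ih =>
      intro ht
      have hx1 : (⟨n - 1 - (t + 1), by omega⟩ : Fin n) + 1 = ⟨n - 1 - t, by omega⟩ := by
        apply Fin.ext
        rw [Fin.val_add, Fin.val_one']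
        simp only [Fin.val_mk]
        rw [Nat.mod_eq_of_lt (show 1 < n by omega), Nat.mod_eq_of_lt (by omega)]
        omega
      rw [hd, hx1, ih (by omega), ← pow_add]
      congr 1
      rw [pow_succ]
      ring
  have hw0 : w ≠ 0 := hne _
  have hcycle : w ^ (2 ^ n) = w := by
    have h0 : d ⟨0, npos⟩ = w ^ (2 ^ (n - 1)) := by
      have := hpow (n - 1) (by omega)
      simpa [Nat.sub_self] using this
    have hlast1 : (⟨n - 1, by omega⟩ : Fin n) + 1 = ⟨0, npos⟩ := by
      apply Fin.ext
      rw [Fin.val_add, Fin.val_one']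
      simp only [Fin.val_mk]
      rw [Nat.mod_eq_of_lt (show 1 < n by omega), show n - 1 + 1 = n by omega, Nat.mod_self]
    have hww := hd ⟨n - 1, by omega⟩
    rw [hlast1, h0, ← pow_add, ← hw] at hww
    have hexp : (2 : ℕ) ^ n = 2 ^ (n - 1) + 2 ^ (n - 1) := by
      conv_lhs => rw [show n = (n - 1) + 1 by omega]
      rw [pow_succ]
      ring
    rw [hexp]
    exact hww.symm
  have hroot : w ^ (2 ^ n - 1) = 1 := by
    apply mul_right_cancel₀ hw0
    rw [← pow_succ, show 2 ^ n - 1 + 1 = 2 ^ n from Nat.sub_add_cancel Nat.one_le_two_pow,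
      hcycle, one_mul]
  obtain ⟨k, hk, hkw⟩ := hζ.eq_pow_of_pow_eq_one hroot
  refine ⟨(k : ZMod (2 ^ n - 1)), ?_⟩
  funext i
  have hieq : i = (⟨n - 1 - (n - 1 - (i : ℕ)), by omega⟩ : Fin n) := by
    apply Fin.ext
    simp only [Fin.val_mk]
    have := i.isLt
    omega
  have h1 : d i = w ^ (2 ^ (n - 1 - (i : ℕ))) := by
    conv_lhs => rw [hieq]
    exact hpow (n - 1 - (i : ℕ)) (by omega)
  rw [h1, ← hkw, ← pow_mul, hc, stmt19_zpc hζ (k * 2 ^ (n - 1 - (i : ℕ)))]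
  congr 2
  push_cast
  ring

lemma stmt19_aut_affine (hn : 2 ≤ n) (hζ : IsPrimitiveRoot ζ (2 ^ n - 1))
    (f : (Fin n → K) ≃ₗ[K] (Fin n → K))
    (hf : ∀ x y : Fin n → K,
      f (fun i => x (i + 1) * y (i + 1)) = fun i => f x (i + 1) * f y (i + 1)) :
    ∃ q < n, ∃ k : ZMod (2 ^ n - 1),
      ∀ i : ZMod (2 ^ n - 1), f (c i) = c (2 ^ q * i + k) := by
  have npos : 0 < n := by omega
  have htwo : (2 : ZMod (2 ^ n - 1)) * 2 ^ (n - 1) = 1 := by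
    rw [← pow_succ', show n - 1 + 1 = n by omega]
    exact stmt19_two_pow_n n
  have hidem : ∀ a : ZMod (2 ^ n - 1), ∃ k, f (c a) = c k := by
    intro a
    have h1 : (fun l => c a (l + 1) * c a (l + 1)) = c a := funext (stmt19_c_sq hc hn hζ a)
    have h2 := hf (c a) (c a)
    rw [h1] at h2
    apply stmt19_idem_eq_c hc hn hζ
    · intro i
      exact congrFun h2 i
    · intro h
      exact stmt19_c_ne_zero hc hζ a (f.map_eq_zero_iff.mp h)
  choose σ hσ using hidem
  have hprodc : ∀ a b : ZMod (2 ^ n - 1),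
      (fun l => c a (l + 1) * c b (l + 1)) = c (2 ^ (n - 1) * (a + b)) := by
    intro a b
    funext l
    rw [stmt19_c_mul hc hζ]
    exact stmt19_c_succ hc hn _ _
  have hprod : ∀ a b : ZMod (2 ^ n - 1),
      σ (2 ^ (n - 1) * (a + b)) = 2 ^ (n - 1) * (σ a + σ b) := by
    intro a b
    have h2 := hf (c a) (c b)
    rw [hprodc, hσ, hσ, hσ] at h2
    have h3 : (fun l => c (σ a) (l + 1) * c (σ b) (l + 1))
        = c (2 ^ (n - 1) * (σ a + σ b)) := hprodc (σ a) (σ b)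
    exact stmt19_c_inj hc hn hζ (h2.trans h3)
  have hadd : ∀ a b : ZMod (2 ^ n - 1), σ a + σ b = σ (a + b) + σ 0 := by
    intro a b
    have h1 := hprod a b
    have h2 := hprod (a + b) 0
    rw [add_zero] at h2
    have h3 : (2 : ZMod (2 ^ n - 1)) * (2 ^ (n - 1) * (σ a + σ b))
        = 2 * (2 ^ (n - 1) * (σ (a + b) + σ 0)) := by rw [← h1, ← h2]
    rwa [← mul_assoc, ← mul_assoc, htwo, one_mul, one_mul] at h3
  have haff : ∀ x : ZMod (2 ^ n - 1), σ x = (σ 1 - σ 0) * x + σ 0 := by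
    have hnat : ∀ t : ℕ, σ ((t : ZMod (2 ^ n - 1))) = (σ 1 - σ 0) * t + σ 0 := by
      intro t
      induction t with
      | zero => simp
      | succ t ih =>
        have h1 := hadd (t : ZMod (2 ^ n - 1)) 1
        push_cast
        push_cast at ih
        linear_combination ih - h1
    intro x
    have := hnat x.val
    rwa [stmt19_valcast x] at this
  have hslope : ∃ q < n, σ 1 - σ 0 = (2 : ZMod (2 ^ n - 1)) ^ q := by
    by_contra hcon
    push_neg at hcon
    set A : Polynomial K :=
      ∏ j : Fin n, (X - C (ζ ^ (((2 : ZMod (2 ^ n - 1)) ^ (j : ℕ)).val))) with hA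
    have hdegA : A.natDegree < 2 ^ n - 1 := by
      have h1 : A.natDegree = n := by
        rw [hA, Polynomial.natDegree_prod _ _ (fun j _ => X_sub_C_ne_zero _),
          Finset.sum_congr rfl (fun j _ => Polynomial.natDegree_X_sub_C _)]
        simp
      rw [h1]
      exact stmt19_n_lt_N hn
    have hv0 : (∑ i ∈ Finset.range (2 ^ n - 1),
        A.coeff i • c ((i : ZMod (2 ^ n - 1)))) = 0 := by
      funext l
      rw [Finset.sum_apply]
      simp only [Pi.smul_apply, smul_eq_mul, Pi.zero_apply]
      have hterm : ∀ i : ℕ, c ((i : ZMod (2 ^ n - 1))) l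
          = (ζ ^ (((2 : ZMod (2 ^ n - 1)) ^ (n - 1 - (l : ℕ))).val)) ^ i := by
        intro i
        rw [hc, stmt19_zp_pow hζ]
      rw [Finset.sum_congr rfl (fun i _ => by rw [hterm i]),
        ← Polynomial.eval_eq_sum_range' hdegA, hA, Polynomial.eval_prod]
      apply Finset.prod_eq_zero (Finset.mem_univ (⟨n - 1 - (l : ℕ), by omega⟩ : Fin n))
      simp only [Polynomial.eval_sub, Polynomial.eval_X, Polynomial.eval_C, Fin.val_mk]
      exact sub_self _
    have hfv := congrArg f hv0
    rw [map_sum, map_zero] at hfv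
    simp only [map_smul] at hfv
    have hσi : ∀ i : ℕ, f (c ((i : ZMod (2 ^ n - 1))))
        = c ((σ 1 - σ 0) * (i : ZMod (2 ^ n - 1)) + σ 0) := by
      intro i
      rw [hσ, haff]
    rw [Finset.sum_congr rfl (fun i _ => by rw [hσi i])] at hfv
    have h0 := congrFun hfv (⟨0, npos⟩ : Fin n)
    rw [Finset.sum_apply] at h0
    simp only [Pi.smul_apply, smul_eq_mul, Pi.zero_apply] at h0
    have hterm2 : ∀ i : ℕ, c ((σ 1 - σ 0) * (i : ZMod (2 ^ n - 1)) + σ 0) (⟨0, npos⟩ : Fin n)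
        = ζ ^ ((2 ^ (n - 1) * σ 0 : ZMod (2 ^ n - 1)).val)
          * (ζ ^ (((2 : ZMod (2 ^ n - 1)) ^ (n - 1) * (σ 1 - σ 0)).val)) ^ i := by
      intro i
      rw [hc]
      simp only [Fin.val_mk, Nat.sub_zero]
      rw [show (2 : ZMod (2 ^ n - 1)) ^ (n - 1) * ((σ 1 - σ 0) * (i : ZMod (2 ^ n - 1)) + σ 0)
          = 2 ^ (n - 1) * σ 0 + (2 ^ (n - 1) * (σ 1 - σ 0)) * (i : ZMod (2 ^ n - 1)) by ring,
        stmt19_zp_add hζ, stmt19_zp_pow hζ]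
    rw [Finset.sum_congr rfl (fun i _ => by rw [hterm2 i])] at h0
    rw [show ∑ i ∈ Finset.range (2 ^ n - 1), A.coeff i
          * (ζ ^ ((2 ^ (n - 1) * σ 0 : ZMod (2 ^ n - 1)).val)
            * (ζ ^ (((2 : ZMod (2 ^ n - 1)) ^ (n - 1) * (σ 1 - σ 0)).val)) ^ i)
        = ζ ^ ((2 ^ (n - 1) * σ 0 : ZMod (2 ^ n - 1)).val)
          * ∑ i ∈ Finset.range (2 ^ n - 1), A.coeff i
            * (ζ ^ (((2 : ZMod (2 ^ n - 1)) ^ (n - 1) * (σ 1 - σ 0)).val)) ^ i by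
        rw [Finset.mul_sum]
        exact Finset.sum_congr rfl (fun i _ => by ring)] at h0
    have hA0 : A.eval (ζ ^ (((2 : ZMod (2 ^ n - 1)) ^ (n - 1) * (σ 1 - σ 0)).val)) = 0 := by
      rw [Polynomial.eval_eq_sum_range' hdegA]
      exact (mul_eq_zero.mp h0).resolve_left (stmt19_zp_ne hζ _)
    rw [hA, Polynomial.eval_prod] at hA0
    obtain ⟨j, _, hj⟩ := Finset.prod_eq_zero_iff.mp hA0
    simp only [Polynomial.eval_sub, Polynomial.eval_X, Polynomial.eval_C] at hj
    have hj2 : (2 : ZMod (2 ^ n - 1)) ^ (n - 1) * (σ 1 - σ 0) = 2 ^ (j : ℕ) :=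
      stmt19_zp_inj hζ (sub_eq_zero.mp hj)
    have hj3 : σ 1 - σ 0 = (2 : ZMod (2 ^ n - 1)) ^ (((j : ℕ) + 1) % n) := by
      have h2 := congrArg (fun z => (2 : ZMod (2 ^ n - 1)) * z) hj2
      rw [← mul_assoc, htwo, one_mul, ← pow_succ'] at h2
      rw [h2, ← stmt19_two_pow_mod]
    exact hcon _ (Nat.mod_lt _ npos) hj3
  obtain ⟨q, hqn, hq⟩ := hslope
  exact ⟨q, hqn, σ 0, fun i => by rw [hσ, haff, hq]⟩

lemma stmt19_exists_aut (hn : 2 ≤ n) (hζ : IsPrimitiveRoot ζ (2 ^ n - 1))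
    (k : ZMod (2 ^ n - 1)) (q : ZMod n) :
    ∃ f : (Fin n → K) ≃ₗ[K] (Fin n → K),
      (∀ x y : Fin n → K,
        f (fun i => x (i + 1) * y (i + 1)) = fun i => f x (i + 1) * f y (i + 1)) ∧
      ∀ i : ZMod (2 ^ n - 1), f (c i) = c (2 ^ q.val * i + k) := by
  set fq : Fin n := ⟨q.val, ZMod.val_lt q⟩ with hfq
  set Gf : (Fin n → K) →ₗ[K] (Fin n → K) :=
    { toFun := fun x l => c k l * x (l - fq)
      map_add' := fun x y => funext fun l => by
        simp only [Pi.add_apply]; ring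
      map_smul' := fun r x => funext fun l => by
        simp only [Pi.smul_apply, smul_eq_mul, RingHom.id_apply]; ring } with hGf
  set Gb : (Fin n → K) →ₗ[K] (Fin n → K) :=
    { toFun := fun y l => (c k (l + fq))⁻¹ * y (l + fq)
      map_add' := fun x y => funext fun l => by
        simp only [Pi.add_apply]; ring
      map_smul' := fun r x => funext fun l => by
        simp only [Pi.smul_apply, smul_eq_mul, RingHom.id_apply]; ring } with hGb
  have h1 : Gf.comp Gb = LinearMap.id := by
    apply LinearMap.ext
    intro y
    funext l
    show c k l * ((c k ((l - fq) + fq))⁻¹ * y ((l - fq) + fq)) = y l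
    rw [sub_add_cancel, ← mul_assoc, mul_inv_cancel₀ (stmt19_c_apply_ne hc hζ k l), one_mul]
  have h2 : Gb.comp Gf = LinearMap.id := by
    apply LinearMap.ext
    intro x
    funext l
    show (c k (l + fq))⁻¹ * (c k (l + fq) * x ((l + fq) - fq)) = x l
    rw [add_sub_cancel_right, ← mul_assoc,
      inv_mul_cancel₀ (stmt19_c_apply_ne hc hζ k _), one_mul]
  refine ⟨LinearEquiv.ofLinear Gf Gb h1 h2, ?_, ?_⟩
  · intro x y
    funext l
    simp only [LinearEquiv.ofLinear_apply]
    show c k l * (x ((l - fq) + 1) * y ((l - fq) + 1))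
        = (c k (l + 1) * x ((l + 1) - fq)) * (c k (l + 1) * y ((l + 1) - fq))
    rw [sub_add_eq_add_sub, ← stmt19_c_sq hc hn hζ k l]
    ring
  · intro i
    funext l
    simp only [LinearEquiv.ofLinear_apply]
    show c k l * c i (l - fq) = _
    rw [stmt19_c_shift hc, stmt19_c_mul hc hζ]
    show c (k + 2 ^ q.val * i) l = c (2 ^ q.val * i + k) l
    rw [add_comm]

end StmtMain
/-- If `n` is regular over `K` (the `(2^n−1)`-th cyclotomic polynomial does not divide
`Λ_n(X^m) − Λ_n(X)` for units `m` not a power of `2` mod `2^n−1`, where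
`Λ_n(X) = ∑_{i<n} X^(2^i)`), then every K-linear automorphism of `(Fin n → K, •_τ)` acts
on the idempotents `c_i` by `c_i ↦ c_{2^q·i + k}`; consequently the automorphism group is
the semidirect product `ℤ/(2^n−1)ℤ ⋊ ℤ/nℤ`, with `ℤ/nℤ` acting by powers of `2`
(encoded via the multiplication law `(k₁,q₁)·(k₂,q₂) = (k₁ + 2^(q₁)k₂, q₁+q₂)`). -/
theorem stmt_19 {K : Type*} [Field K] (n : ℕ) [NeZero n] [NeZero (2 ^ n - 1)] (hn : 2 ≤ n)
    (ζ : K) (hζ : IsPrimitiveRoot ζ (2 ^ n - 1))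
    (c : ZMod (2 ^ n - 1) → Fin n → K)
    (hc : ∀ k (i : Fin n), c k i = ζ ^ ((2 ^ (n - 1 - (i : ℕ)) * k : ZMod (2 ^ n - 1)).val))
    (hreg : ∀ m : ℕ, Nat.Coprime m (2 ^ n - 1) →
      (¬ ∃ q < n, (m : ZMod (2 ^ n - 1)) = 2 ^ q) →
      ¬ (Polynomial.cyclotomic (2 ^ n - 1) K ∣
          (∑ i ∈ Finset.range n, (Polynomial.X : Polynomial K) ^ (2 ^ i * m)) -
            ∑ i ∈ Finset.range n, (Polynomial.X : Polynomial K) ^ (2 ^ i))) :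
    (∀ f : (Fin n → K) ≃ₗ[K] (Fin n → K),
      (∀ x y : Fin n → K,
        f (fun i => x (i + 1) * y (i + 1)) = fun i => f x (i + 1) * f y (i + 1)) →
      ∃ q < n, ∃ k : ZMod (2 ^ n - 1),
        ∀ i : ZMod (2 ^ n - 1), f (c i) = c (2 ^ q * i + k)) ∧
    ∃ e : {f : (Fin n → K) ≃ₗ[K] (Fin n → K) //
            ∀ x y : Fin n → K,
              f (fun i => x (i + 1) * y (i + 1)) = fun i => f x (i + 1) * f y (i + 1)} ≃
          (ZMod (2 ^ n - 1) × ZMod n),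
      ∀ f g h : {f : (Fin n → K) ≃ₗ[K] (Fin n → K) //
            ∀ x y : Fin n → K,
              f (fun i => x (i + 1) * y (i + 1)) = fun i => f x (i + 1) * f y (i + 1)},
        (∀ x : Fin n → K, h.1 x = f.1 (g.1 x)) →
          (e h).1 = (e f).1 + 2 ^ ((e f).2.val) * (e g).1 ∧ (e h).2 = (e f).2 + (e g).2 := by
  constructor
  · intro f hf
    exact stmt19_aut_affine hc hn hζ f hf
  · have hex : ∀ f : {f : (Fin n → K) ≃ₗ[K] (Fin n → K) //
        ∀ x y : Fin n → K,
          f (fun i => x (i + 1) * y (i + 1)) = fun i => f x (i + 1) * f y (i + 1)},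
        ∃ p : ZMod (2 ^ n - 1) × ZMod n,
          ∀ i : ZMod (2 ^ n - 1), f.1 (c i) = c (2 ^ (p.2.val) * i + p.1) := by
      intro f
      obtain ⟨q, hq, k, hk⟩ := stmt19_aut_affine hc hn hζ f.1 f.2
      refine ⟨(k, (q : ZMod n)), fun i => ?_⟩
      rw [hk i]
      have : ((q : ZMod n)).val = q := by rw [ZMod.val_natCast, Nat.mod_eq_of_lt hq]
      rw [this]
    choose E hE using hex
    have huniq : ∀ f (p : ZMod (2 ^ n - 1) × ZMod n),
        (∀ i : ZMod (2 ^ n - 1), f.1 (c i) = c (2 ^ (p.2.val) * i + p.1)) → E f = p := by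
      intro f p hp
      have h := stmt19_c_uniq hc hn hζ (ZMod.val_lt (E f).2) (ZMod.val_lt p.2)
        (fun i => ((hE f i).symm.trans (hp i)))
      have h2 : (E f).2 = p.2 := by
        rw [← stmt19_valcast (E f).2, ← stmt19_valcast p.2, h.2]
      exact Prod.ext h.1 h2
    have hinj : Function.Injective E := by
      intro f g hfg
      have hceq : ∀ i, f.1 (c i) = g.1 (c i) := by
        intro i; rw [hE f i, hE g i, hfg]
      have hlm : (f.1 : (Fin n → K) →ₗ[K] (Fin n → K)) = g.1 := by
        apply LinearMap.ext_on (stmt19_c_span hc hn hζ)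
        rintro x ⟨i, rfl⟩
        exact hceq i
      exact Subtype.ext (LinearEquiv.toLinearMap_injective hlm)
    have hsurj : Function.Surjective E := by
      rintro ⟨k, q⟩
      obtain ⟨f, hfm, hfa⟩ := stmt19_exists_aut hc hn hζ k q
      exact ⟨⟨f, hfm⟩, huniq ⟨f, hfm⟩ (k, q) hfa⟩
    refine ⟨Equiv.ofBijective E ⟨hinj, hsurj⟩, ?_⟩
    intro f g h hcomp
    have hpow : (2 : ZMod (2 ^ n - 1)) ^ ((E f).2.val) * 2 ^ ((E g).2.val)
        = 2 ^ (((E f).2 + (E g).2).val) := by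
      rw [← pow_add, ZMod.val_add, ← stmt19_two_pow_mod]
    have hi : ∀ i : ZMod (2 ^ n - 1), h.1 (c i)
        = c (2 ^ (((E f).2 + (E g).2).val) * i + ((E f).1 + 2 ^ ((E f).2.val) * (E g).1)) := by
      intro i
      rw [hcomp, hE g i, hE f]
      congr 1
      rw [← hpow]
      ring
    have hEh := huniq h ((E f).1 + 2 ^ ((E f).2.val) * (E g).1, (E f).2 + (E g).2) hi
    constructor
    · show (E h).1 = (E f).1 + 2 ^ ((E f).2.val) * (E g).1
      rw [hEh]
    · show (E h).2 = (E f).2 + (E g).2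
      rw [hEh]
end
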